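/- arXiv:2012.12538 — 11 statements merged into one kernel-verified Lean document; each statement's English description precedes it below -/
import Mathlib

section
/- Let X be a real normed linear space, let f, g be norm-one continuous linear functionals on X, and let ε > 0. If every x in the closed unit ball of X with f(x) > ε satisfies g(x) > 0, then ‖f − g‖ ≤ 2ε. -/
set_option maxHeartbeats 1000000

open NormedSpace

/-- Parallel Hyperplane Lemma (variant): if the part of the unit ball where `f > ε`
lies in the open half-space `g > 0`, then `‖f - g‖ ≤ 2ε`. -/
theorem stmt_0 {X : Type*} [NormedAddCommGroup X] [NormedSpace ℝ X]
    (f g : StrongDual ℝ X) (hf : ‖f‖ = 1) (hg : ‖g‖ = 1) (ε : ℝ) (hε : 0 < ε)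
    (h : ∀ x : X, ‖x‖ ≤ 1 → ε < f x → 0 < g x) :
    ‖f - g‖ ≤ 2 * ε := by
  rcases le_or_gt 1 ε with hε1 | hε1
  · calc ‖f - g‖ ≤ ‖f‖ + ‖g‖ := norm_sub_le _ _
      _ ≤ 2 * ε := by rw [hf, hg]; linarith
  have habs : ∀ (φ : StrongDual ℝ X), ‖φ‖ = 1 → ∀ v : X, ‖v‖ ≤ 1 → |φ v| ≤ 1 := by
    intro φ hφ v hv
    have := φ.le_opNorm v
    rw [hφ, one_mul] at this
    calc |φ v| = ‖φ v‖ := (Real.norm_eq_abs _).symm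
      _ ≤ ‖v‖ := this
      _ ≤ 1 := hv
  have key : ∀ x : X, ‖x‖ ≤ 1 → f x - g x ≤ 2 * ε := by
    intro x hx
    refine le_of_forall_pos_le_add fun η hη => ?_
    set δ : ℝ := min (η / (η + ε + 1)) ((1 - ε) / 2) with hδdef
    have hden : 0 < η + ε + 1 := by linarith
    have hδ0 : 0 < δ := lt_min (div_pos hη hden) (by linarith)
    have hδle : δ ≤ η / (η + ε + 1) := min_le_left _ _
    have hδε : δ ≤ (1 - ε) / 2 := min_le_right _ _
    have hδ1 : δ < 1 := by linarith
    have hδle' : δ * (η + ε + 1) ≤ η := by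
      have := (le_div_iff₀ hden).mp hδle; linarith
    have hδη : δ ≤ η := by nlinarith
    have hdd : δ * (ε + 1) ≤ η * (1 - δ) := by nlinarith
    have hgx1 : |g x| ≤ 1 := habs g hg x hx
    rcases le_or_gt (g x) 0 with hgx | hgx
    · -- case g x ≤ 0 : use u with f u > 1 - δ
      obtain ⟨u, hu1, hu2⟩ : ∃ u : X, ‖u‖ ≤ 1 ∧ 1 - δ < f u := by
        obtain ⟨u, hu1, hu2⟩ := f.exists_lt_apply_of_lt_opNorm (r := 1 - δ) (by rw [hf]; linarith)
        rcases le_or_gt 0 (f u) with h0 | h0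
        · exact ⟨u, hu1.le, by rwa [Real.norm_eq_abs, abs_of_nonneg h0] at hu2⟩
        · refine ⟨-u, by simpa using hu1.le, ?_⟩
          rw [map_neg]
          rw [Real.norm_eq_abs, abs_of_neg h0] at hu2
          linarith
      set s : ℝ := -g x with hs
      have hs0 : 0 ≤ s := by simp only [hs]; linarith
      have hs1 : s ≤ 1 := by
        have := (abs_le.mp hgx1).1
        simp only [hs]; linarith
      have h1s : (0:ℝ) < 1 + s := by linarith
      set y : X := (1 + s)⁻¹ • (x + s • u) with hy
      have hy1 : ‖y‖ ≤ 1 := by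
        rw [hy, norm_smul, Real.norm_eq_abs, abs_of_nonneg (by positivity)]
        have hb : ‖x + s • u‖ ≤ 1 + s := by
          calc ‖x + s • u‖ ≤ ‖x‖ + ‖s • u‖ := norm_add_le _ _
            _ ≤ 1 + s := by
              rw [norm_smul, Real.norm_eq_abs, abs_of_nonneg hs0]
              nlinarith
        calc (1 + s)⁻¹ * ‖x + s • u‖ ≤ (1 + s)⁻¹ * (1 + s) :=
              mul_le_mul_of_nonneg_left hb (by positivity)
          _ = 1 := by field_simp
      have hgu : g u ≤ 1 := (abs_le.mp (habs g hg u hu1)).2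
      have hgy : g y ≤ 0 := by
        rw [hy]
        simp only [map_smul, map_add, smul_eq_mul]
        have h2 : g x + s * g u ≤ 0 := by
          have he : g x + s * g u = g x * (1 - g u) := by rw [hs]; ring
          rw [he]; exact mul_nonpos_of_nonpos_of_nonneg hgx (by linarith)
        have hpos : (0:ℝ) ≤ (1+s)⁻¹ := by positivity
        exact mul_nonpos_of_nonneg_of_nonpos hpos h2
      have hfy : f y ≤ ε := by
        by_contra hc
        exact absurd (h y hy1 (lt_of_not_ge hc)) (not_lt.mpr hgy)
      have hfyeq : f y = (1+s)⁻¹ * (f x + s * f u) := by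
        rw [hy]; simp only [map_smul, map_add, smul_eq_mul]
      have hfx : f x + s * f u ≤ ε * (1 + s) := by
        rw [hfyeq, inv_mul_le_iff₀ h1s] at hfy
        linarith [hfy]
      have hsu : s * (1 - δ) ≤ s * f u := mul_le_mul_of_nonneg_left hu2.le hs0
      have hfg : f x - g x ≤ ε * (1 + s) + s * δ := by
        have : f x - g x = f x + s := by rw [hs]; ring
        nlinarith
      nlinarith
    · -- case g x > 0 : use v with g v > 1 - δ
      obtain ⟨v, hv1, hv2⟩ : ∃ v : X, ‖v‖ ≤ 1 ∧ 1 - δ < g v := by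
        obtain ⟨v, hv1, hv2⟩ := g.exists_lt_apply_of_lt_opNorm (r := 1 - δ) (by rw [hg]; linarith)
        rcases le_or_gt 0 (g v) with h0 | h0
        · exact ⟨v, hv1.le, by rwa [Real.norm_eq_abs, abs_of_nonneg h0] at hv2⟩
        · refine ⟨-v, by simpa using hv1.le, ?_⟩
          rw [map_neg]
          rw [Real.norm_eq_abs, abs_of_neg h0] at hv2
          linarith
      have hgv0 : 0 < g v := by linarith
      set s : ℝ := g x / g v with hs
      have hs0 : 0 ≤ s := le_of_lt (div_pos hgx hgv0)
      have h1s : (0:ℝ) < 1 + s := by linarith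
      set y : X := (1 + s)⁻¹ • (x - s • v) with hy
      have hy1 : ‖y‖ ≤ 1 := by
        rw [hy, norm_smul, Real.norm_eq_abs, abs_of_nonneg (by positivity)]
        have hb : ‖x - s • v‖ ≤ 1 + s := by
          calc ‖x - s • v‖ ≤ ‖x‖ + ‖s • v‖ := norm_sub_le _ _
            _ ≤ 1 + s := by
              rw [norm_smul, Real.norm_eq_abs, abs_of_nonneg hs0]
              nlinarith
        calc (1 + s)⁻¹ * ‖x - s • v‖ ≤ (1 + s)⁻¹ * (1 + s) :=
              mul_le_mul_of_nonneg_left hb (by positivity)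
          _ = 1 := by field_simp
      have hgy : g y = 0 := by
        rw [hy]
        simp only [map_smul, map_sub, smul_eq_mul]
        have : g x - s * g v = 0 := by
          rw [hs, div_mul_cancel₀ _ (ne_of_gt hgv0), sub_self]
        rw [this, mul_zero]
      have hfy : f y ≤ ε := by
        by_contra hc
        have := h y hy1 (lt_of_not_ge hc)
        rw [hgy] at this; exact lt_irrefl 0 this
      have hfyeq : f y = (1+s)⁻¹ * (f x - s * f v) := by
        rw [hy]; simp only [map_smul, map_sub, smul_eq_mul]
      have hfx : f x - s * f v ≤ ε * (1 + s) := by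
        rw [hfyeq, inv_mul_le_iff₀ h1s] at hfy
        linarith [hfy]
      have hfv : f v ≤ 1 := (abs_le.mp (habs f hf v hv1)).2
      have hgx2 : g x ≤ 1 := (abs_le.mp hgx1).2
      -- s ≤ 1/(1-δ) and s - g x = g x (1 - g v)/g v ≤ δ/(1-δ)
      have hseq : s * g v = g x := by rw [hs]; exact div_mul_cancel₀ _ (ne_of_gt hgv0)
      have hsle : s * (1 - δ) ≤ 1 := by nlinarith
      have hsmg : (s - g x) * (1 - δ) ≤ δ := by nlinarith
      have hbig : f x - g x ≤ ε * (1 + s) + s - g x := by nlinarith [mul_le_mul_of_nonneg_left hfv hs0]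
      -- conclude: ε(1+s) + (s - g x) ≤ 2ε + η
      nlinarith
  refine ContinuousLinearMap.opNorm_le_bound _ (by positivity) fun x => ?_
  rcases eq_or_ne x 0 with rfl | hx0
  · simp
  · have hxn : 0 < ‖x‖ := norm_pos_iff.mpr hx0
    have hu : ‖(‖x‖⁻¹ • x)‖ ≤ 1 := by
      rw [norm_smul, Real.norm_eq_abs, abs_of_nonneg (by positivity)]
      field_simp; rfl
    have h1 := key (‖x‖⁻¹ • x) hu
    have h2 := key (-(‖x‖⁻¹ • x)) (by rwa [norm_neg])
    simp only [map_smul, map_neg, smul_eq_mul] at h1 h2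
    rw [ContinuousLinearMap.sub_apply, Real.norm_eq_abs, abs_le]
    have hinv : ‖x‖⁻¹ * ‖x‖ = 1 := inv_mul_cancel₀ hxn.ne'
    have e1 := mul_le_mul_of_nonneg_right h1 hxn.le
    have e2 := mul_le_mul_of_nonneg_right h2 hxn.le
    have k1 : (‖x‖⁻¹ * f x - ‖x‖⁻¹ * g x) * ‖x‖ = f x - g x := by
      field_simp
    have k2 : (-(‖x‖⁻¹ * f x) - -(‖x‖⁻¹ * g x)) * ‖x‖ = g x - f x := by
      field_simp; ring
    rw [k1] at e1; rw [k2] at e2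
    constructor <;> linarith
end

section
/- Let X be a real normed linear space, f, g ∈ X* with ‖f‖ = ‖g‖ = 1, ε > 0, and suppose {x ∈ B(X) : f(x) > ε} ⊆ {x : g(x) > 0}. Then there exists a real number t with |1 − t| ≤ ε and ‖f − t·g‖ ≤ ε. -/
/-!
On `ker g` the hypothesis forces `|f x| ≤ ε ‖x‖` (otherwise `±x / ‖x‖` would be a point of the
ball with `f > ε` and `g = 0`). A Hahn–Banach extension `φ` of `f` restricted to `ker g` then has
`‖φ‖ ≤ ε`, and `f - φ` vanishes on `ker g`, so `f - φ = t • g`. Evaluating at a point `y` of the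
ball with `f y > ε` shows `t > 0`, whence `|1 - t| = |‖f‖ - ‖t • g‖| ≤ ‖f - t • g‖ ≤ ε`.
-/

theorem LinearMap.exists_eq_smul_of_ker_le {𝕜 E : Type*} [Field 𝕜] [AddCommGroup E] [Module 𝕜 E]
    {g K : E →ₗ[𝕜] 𝕜} (h : LinearMap.ker g ≤ LinearMap.ker K) : ∃ t : 𝕜, K = t • g := by
  have hspan := mem_span_of_iInf_ker_le_ker (L := fun _ : Unit => g) (by simpa using h)
  rw [Set.range_const] at hspan
  obtain ⟨t, ht⟩ := Submodule.mem_span_singleton.1 hspan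
  exact ⟨t, ht.symm⟩

theorem exists_norm_sub_smul_le_of_norm_apply_le {𝕜 X : Type*} [RCLike 𝕜] [NormedAddCommGroup X]
    [NormedSpace 𝕜 X] {f g : StrongDual 𝕜 X} {ε : ℝ} (hε : 0 ≤ ε)
    (hker : ∀ x, g x = 0 → ‖f x‖ ≤ ε * ‖x‖) : ∃ t : 𝕜, ‖f - t • g‖ ≤ ε := by
  let K : Subspace 𝕜 X := LinearMap.ker (g : X →ₗ[𝕜] 𝕜)
  obtain ⟨φ, hφf, hφ⟩ := exists_extension_norm_eq K (f.comp K.subtypeL)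
  have hφε : ‖φ‖ ≤ ε :=
    hφ ▸ ContinuousLinearMap.opNorm_le_bound _ hε fun x => hker x x.2
  have hfφ :
      LinearMap.ker (g : X →ₗ[𝕜] 𝕜) ≤ LinearMap.ker ((f - φ : StrongDual 𝕜 X) : X →ₗ[𝕜] 𝕜) :=
    fun x hx => by simpa [sub_eq_zero] using (hφf ⟨x, hx⟩).symm
  obtain ⟨t, ht⟩ := LinearMap.exists_eq_smul_of_ker_le hfφ
  have hft : f - φ = t • g := ContinuousLinearMap.coe_injective (by rw [ht]; rfl)
  exact ⟨t, by rwa [← hft, sub_sub_cancel]⟩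

theorem ContinuousLinearMap.exists_norm_le_one_lt_apply {X : Type*} [NormedAddCommGroup X]
    [NormedSpace ℝ X] (f : StrongDual ℝ X) {r : ℝ} (hr : r < ‖f‖) :
    ∃ y : X, ‖y‖ ≤ 1 ∧ r < f y := by
  obtain ⟨x, hx, hrx⟩ := f.exists_lt_apply_of_lt_opNorm hr
  rw [Real.norm_eq_abs] at hrx
  rcases le_total 0 (f x) with hfx | hfx
  · exact ⟨x, hx.le, by rwa [abs_of_nonneg hfx] at hrx⟩
  · exact ⟨-x, by simpa using hx.le, by rwa [abs_of_nonpos hfx, ← map_neg] at hrx⟩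

section KernelBound

variable {X : Type*} [NormedAddCommGroup X] [NormedSpace ℝ X] {f g : StrongDual ℝ X} {ε : ℝ}
  (h : ∀ x : X, ‖x‖ ≤ 1 → ε < f x → 0 < g x)
include h

theorem apply_le_mul_norm_of_apply_eq_zero {x : X} (hx : g x = 0) : f x ≤ ε * ‖x‖ := by
  by_contra! hlt
  have hx0 : x ≠ 0 := by rintro rfl; simp at hlt
  have hpos : 0 < ‖x‖ := norm_pos_iff.2 hx0
  have hfu : ε < f (‖x‖⁻¹ • x) := by
    rw [map_smul, smul_eq_mul, lt_inv_mul_iff₀ hpos, mul_comm]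
    exact hlt
  simpa [hx] using h _ (norm_smul_inv_norm hx0).le hfu

theorem norm_apply_le_mul_norm_of_apply_eq_zero {x : X} (hx : g x = 0) : ‖f x‖ ≤ ε * ‖x‖ := by
  have hneg : g (-x) = 0 := by simp [hx]
  rw [Real.norm_eq_abs, abs_le]
  constructor
  · linarith [show -f x ≤ ε * ‖x‖ by simpa using apply_le_mul_norm_of_apply_eq_zero h hneg]
  · exact apply_le_mul_norm_of_apply_eq_zero h hx

end KernelBound

/-- Quantitative core of the parallel hyperplane lemma: `f` is within `ε`
of `t • g` for some `t` with `|1 - t| ≤ ε`. -/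
theorem stmt_1 {X : Type*} [NormedAddCommGroup X] [NormedSpace ℝ X]
    (f g : StrongDual ℝ X) (hf : ‖f‖ = 1) (hg : ‖g‖ = 1) (ε : ℝ) (hε : 0 < ε)
    (h : ∀ x : X, ‖x‖ ≤ 1 → ε < f x → 0 < g x) :
    ∃ t : ℝ, |1 - t| ≤ ε ∧ ‖f - t • g‖ ≤ ε := by
  rcases le_or_gt 1 ε with hε1 | hε1
  · exact ⟨0, by simpa using hε1, by simpa [hf] using hε1⟩
  obtain ⟨t, hft⟩ :=
    exists_norm_sub_smul_le_of_norm_apply_le hε.le fun _ => norm_apply_le_mul_norm_of_apply_eq_zero h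
  obtain ⟨y, hy, hfy⟩ := f.exists_norm_le_one_lt_apply (hf ▸ hε1)
  have ht : 0 < t := by
    have hgy : 0 < g y := h y hy hfy
    have hdiff : f y - t * g y ≤ ε := calc
      f y - t * g y ≤ ‖f - t • g‖ * ‖y‖ := (le_abs_self _).trans ((f - t • g).le_opNorm y)
      _ ≤ ‖f - t • g‖ := mul_le_of_le_one_right (norm_nonneg _) hy
      _ ≤ ε := hft
    exact pos_of_mul_pos_left (by linarith : 0 < t * g y) hgy.le
  refine ⟨t, ?_, hft⟩
  calc |1 - t| = |‖f‖ - ‖t • g‖| := by rw [hf, norm_smul, hg, mul_one, Real.norm_of_nonneg ht.le]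
    _ ≤ ‖f - t • g‖ := abs_norm_sub_norm_le _ _
    _ ≤ ε := hft
end

section
/- Let X be a real Banach space and A ⊆ X** a bounded set with d := d(0, A) > 0 and M := sup{‖x**‖ : x** ∈ A}. Suppose there exist x₀ ∈ X with ‖x₀‖ = 1 and 0 < ε < 1 such that {f ∈ B(X*) : f(x₀) > ε} ⊆ {f ∈ B(X*) : x**(f) > 0 for all x** ∈ A}. Then for every λ ≥ M/(1 − ε), A ⊆ B**[λx₀, λ − d(1−ε)/(1+ε)] and 0 ∉ B**[λx₀, λ − d(1−ε)/(1+ε)]. -/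
/-!
Write `φ = J x₀`, so that `‖φ‖ = 1 = φ f₀` for a norming functional `f₀` of `x₀`. Rescaling, and
a perturbation towards `f₀`, show that each `a ∈ A` is nonnegative on the cone `{f : ε‖f‖ ≤ φ f}`
spanned by the slice. For `f` in the unit ball with `φ f ≤ ε` this cone contains
`(1-ε) f + (ε - φ f) f₀`, giving `(φ f - ε)‖a‖ ≤ (1-ε) a f`; for `φ f ≥ ε` it contains
`(1+ε) f + (φ f - ε) g` for every `g` in the unit ball, giving `(φ f - ε)‖a‖ ≤ (1+ε) a f`.
With `‖a‖ ≤ M ≤ λ(1-ε)` both bounds yield `a f ≥ λ(φ f - 1) + ‖a‖(1-ε)/(1+ε)`, and applying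
this to `±f` gives `‖a - λφ‖ ≤ λ - ‖a‖(1-ε)/(1+ε) ≤ λ - d(1-ε)/(1+ε)`.
-/

open NormedSpace Filter Topology

theorem norm_smul_add_smul_le_add {E : Type*} [SeminormedAddCommGroup E] [NormedSpace ℝ E]
    {f g : E} (hf : ‖f‖ ≤ 1) (hg : ‖g‖ ≤ 1) {s t : ℝ} (hs : 0 ≤ s) (ht : 0 ≤ t) :
    ‖s • f + t • g‖ ≤ s + t :=
  calc ‖s • f + t • g‖ ≤ s * ‖f‖ + t * ‖g‖ := by
        simpa only [norm_smul, Real.norm_of_nonneg hs, Real.norm_of_nonneg ht]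
          using norm_add_le (s • f) (t • g)
    _ ≤ s + t := by nlinarith

namespace StrongDual

variable {E : Type*} [NormedAddCommGroup E] [NormedSpace ℝ E] {φ a : StrongDual ℝ E} {ε : ℝ}

theorem apply_pos_of_mul_norm_lt (hslice : ∀ f : E, ‖f‖ ≤ 1 → ε < φ f → 0 < a f) {f : E}
    (hf : ε * ‖f‖ < φ f) : 0 < a f := by
  have hnorm : 0 < ‖f‖ := norm_pos_iff.mpr (by rintro rfl; simp at hf)
  have hunit : 0 < ‖f‖⁻¹ * a f := by
    simpa only [map_smul, smul_eq_mul] using hslice (‖f‖⁻¹ • f)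
      (by rw [norm_smul, norm_inv, norm_norm, inv_mul_cancel₀ hnorm.ne'])
      (by rw [map_smul, smul_eq_mul, lt_inv_mul_iff₀ hnorm, mul_comm]; exact hf)
  simpa only [mul_inv_cancel_left₀ hnorm.ne'] using mul_pos hnorm hunit

theorem apply_nonneg_of_mul_norm_le (hslice : ∀ f : E, ‖f‖ ≤ 1 → ε < φ f → 0 < a f)
    {f₀ : E} (hf₀ : ‖f₀‖ ≤ 1) (hφf₀ : φ f₀ = 1) (hε0 : 0 ≤ ε) (hε1 : ε < 1) {f : E}
    (hf : ε * ‖f‖ ≤ φ f) : 0 ≤ a f := by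
  have hpert : ∀ t : ℝ, 0 < t → 0 < a f + t * a f₀ := fun t ht => by
    have hcone : ε * ‖f + t • f₀‖ < φ (f + t • f₀) :=
      calc ε * ‖f + t • f₀‖ ≤ ε * (‖f‖ + t) := by
            gcongr
            refine (norm_add_le _ _).trans (add_le_add_right ?_ _)
            rw [norm_smul, Real.norm_of_nonneg ht.le]
            exact mul_le_of_le_one_right ht.le hf₀
        _ < φ (f + t • f₀) := by
            rw [map_add, map_smul, hφf₀, smul_eq_mul, mul_one]; nlinarith
    simpa only [map_add, map_smul, smul_eq_mul] using apply_pos_of_mul_norm_lt hslice hcone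
  have hlim : Tendsto (fun t : ℝ => a f + t * a f₀) (𝓝[>] 0) (𝓝 (a f)) := by
    have hcont : Continuous fun t : ℝ => a f + t * a f₀ := by fun_prop
    simpa using (hcont.tendsto 0).mono_left nhdsWithin_le_nhds
  exact ge_of_tendsto hlim (eventually_nhdsWithin_of_forall fun t ht => (hpert t ht).le)

theorem sub_mul_norm_le_one_sub_mul_apply (hslice : ∀ f : E, ‖f‖ ≤ 1 → ε < φ f → 0 < a f)
    {f₀ : E} (hf₀ : ‖f₀‖ ≤ 1) (hφf₀ : φ f₀ = 1) (hε0 : 0 ≤ ε) (hε1 : ε < 1) {f : E}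
    (hf : ‖f‖ ≤ 1) (hφf : φ f ≤ ε) : (φ f - ε) * ‖a‖ ≤ (1 - ε) * a f := by
  have hcone : ε * ‖(1 - ε) • f + (ε - φ f) • f₀‖ ≤ φ ((1 - ε) • f + (ε - φ f) • f₀) :=
    calc ε * ‖(1 - ε) • f + (ε - φ f) • f₀‖ ≤ ε * ((1 - ε) + (ε - φ f)) := by
          gcongr; exact norm_smul_add_smul_le_add hf hf₀ (by linarith) (by linarith)
      _ = φ ((1 - ε) • f + (ε - φ f) • f₀) := by
          rw [map_add, map_smul, map_smul, hφf₀, smul_eq_mul, smul_eq_mul]; ring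
  have hcomb : 0 ≤ (1 - ε) * a f + (ε - φ f) * a f₀ := by
    simpa only [map_add, map_smul, smul_eq_mul]
      using apply_nonneg_of_mul_norm_le hslice hf₀ hφf₀ hε0 hε1 hcone
  have haf₀ : a f₀ ≤ ‖a‖ :=
    (le_abs_self _).trans ((a.le_opNorm_of_le hf₀).trans_eq (mul_one _))
  nlinarith [mul_le_mul_of_nonneg_left haf₀ (sub_nonneg.2 hφf)]

theorem sub_mul_norm_le_one_add_mul_apply (hslice : ∀ f : E, ‖f‖ ≤ 1 → ε < φ f → 0 < a f)
    (hφ : ‖φ‖ ≤ 1) {f₀ : E} (hf₀ : ‖f₀‖ ≤ 1) (hφf₀ : φ f₀ = 1) (hε0 : 0 ≤ ε) (hε1 : ε < 1)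
    {f : E} (hf : ‖f‖ ≤ 1) (hφf : ε ≤ φ f) : (φ f - ε) * ‖a‖ ≤ (1 + ε) * a f := by
  have hcomb : ∀ g : E, ‖g‖ ≤ 1 → -((φ f - ε) * a g) ≤ (1 + ε) * a f := fun g hg => by
    have hφg : -1 ≤ φ g :=
      neg_le_of_abs_le ((φ.le_opNorm g).trans (mul_le_one₀ hφ (norm_nonneg g) hg))
    have hcone : ε * ‖(1 + ε) • f + (φ f - ε) • g‖ ≤ φ ((1 + ε) • f + (φ f - ε) • g) :=
      calc ε * ‖(1 + ε) • f + (φ f - ε) • g‖ ≤ ε * ((1 + ε) + (φ f - ε)) := by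
            gcongr; exact norm_smul_add_smul_le_add hf hg (by linarith) (by linarith)
        _ ≤ φ ((1 + ε) • f + (φ f - ε) • g) := by
            rw [map_add, map_smul, map_smul, smul_eq_mul, smul_eq_mul]
            nlinarith [mul_le_mul_of_nonneg_left hφg (sub_nonneg.2 hφf)]
    have hnonneg := apply_nonneg_of_mul_norm_le hslice hf₀ hφf₀ hε0 hε1 hcone
    simp only [map_add, map_smul, smul_eq_mul] at hnonneg
    linarith
  have haf : 0 ≤ a f := apply_nonneg_of_mul_norm_le hslice hf₀ hφf₀ hε0 hε1
    (by nlinarith [mul_le_mul_of_nonneg_left hf hε0])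
  calc (φ f - ε) * ‖a‖ = ‖(φ f - ε) • a‖ := by
        rw [norm_smul, Real.norm_of_nonneg (sub_nonneg.2 hφf)]
    _ ≤ (1 + ε) * a f := by
        refine ContinuousLinearMap.opNorm_le_of_unit_norm (by positivity) fun g hg => ?_
        have hneg := hcomb (-g) (by rw [norm_neg, hg])
        rw [map_neg, mul_neg, neg_neg] at hneg
        rw [smul_apply, smul_eq_mul, Real.norm_eq_abs, abs_le]
        exact ⟨by linarith [hcomb g hg.le], hneg⟩

theorem mul_sub_one_add_le_apply (hslice : ∀ f : E, ‖f‖ ≤ 1 → ε < φ f → 0 < a f)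
    (hφ : ‖φ‖ ≤ 1) {f₀ : E} (hf₀ : ‖f₀‖ ≤ 1) (hφf₀ : φ f₀ = 1) (hε0 : 0 ≤ ε) (hε1 : ε < 1)
    {lam : ℝ} (ha : ‖a‖ ≤ lam * (1 - ε)) {f : E} (hf : ‖f‖ ≤ 1) :
    lam * (φ f - 1) + ‖a‖ * (1 - ε) / (1 + ε) ≤ a f := by
  set r := ‖a‖ * (1 - ε) / (1 + ε)
  have hr : r * (1 + ε) = ‖a‖ * (1 - ε) := div_mul_cancel₀ _ (by linarith)
  have hr_le : r ≤ ‖a‖ :=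
    le_of_mul_le_mul_right (by nlinarith [norm_nonneg a] : r * (1 + ε) ≤ ‖a‖ * (1 + ε))
      (by linarith)
  have hlam : 0 ≤ lam := nonneg_of_mul_nonneg_left ((norm_nonneg a).trans ha) (by linarith)
  have hφf : φ f ≤ 1 := le_of_abs_le ((φ.le_opNorm f).trans (mul_le_one₀ hφ (norm_nonneg f) hf))
  rcases le_total (φ f) ε with hφε | hεφ
  · have key := sub_mul_norm_le_one_sub_mul_apply hslice hf₀ hφf₀ hε0 hε1 hf hφε
    nlinarith [mul_le_mul_of_nonpos_left ha (sub_nonpos.2 hφε)]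
  · have key := sub_mul_norm_le_one_add_mul_apply hslice hφ hf₀ hφf₀ hε0 hε1 hf hεφ
    nlinarith [mul_nonneg (sub_nonneg.2 hφf) (sub_nonneg.2 hεφ), mul_nonneg hlam hε0]

theorem norm_sub_smul_le (hslice : ∀ f : E, ‖f‖ ≤ 1 → ε < φ f → 0 < a f)
    (hφ : ‖φ‖ ≤ 1) {f₀ : E} (hf₀ : ‖f₀‖ ≤ 1) (hφf₀ : φ f₀ = 1) (hε0 : 0 ≤ ε) (hε1 : ε < 1)
    {lam : ℝ} (ha : ‖a‖ ≤ lam * (1 - ε)) :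
    ‖a - lam • φ‖ ≤ lam - ‖a‖ * (1 - ε) / (1 + ε) := by
  have hbound f (hf : ‖f‖ ≤ 1) := mul_sub_one_add_le_apply hslice hφ hf₀ hφf₀ hε0 hε1 ha hf
  have hr : 0 ≤ lam - ‖a‖ * (1 - ε) / (1 + ε) := by
    have h0 := hbound 0 (by simp)
    simp only [map_zero, zero_sub, mul_neg, mul_one] at h0
    linarith
  refine ContinuousLinearMap.opNorm_le_of_unit_norm hr fun f hf => ?_
  have hneg := hbound (-f) (by rw [norm_neg, hf])
  rw [map_neg, map_neg] at hneg
  have hpos := hbound f hf.le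
  rw [sub_apply, smul_apply, smul_eq_mul, Real.norm_eq_abs, abs_le]
  constructor <;> linarith

end StrongDual

theorem stmt_3_general {X : Type*} [NormedAddCommGroup X] [NormedSpace ℝ X]
    (A : Set (StrongDual ℝ (StrongDual ℝ X))) (d M ε : ℝ) (x₀ : X)
    (hd : 0 < d) (hdA : ∀ a ∈ A, d ≤ ‖a‖) (hM : ∀ a ∈ A, ‖a‖ ≤ M)
    (hx₀ : ‖x₀‖ = 1) (hε0 : 0 < ε) (hε1 : ε < 1)
    (h : {f : StrongDual ℝ X | ‖f‖ ≤ 1 ∧ ε < f x₀} ⊆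
      {f : StrongDual ℝ X | ‖f‖ ≤ 1 ∧ ∀ a ∈ A, 0 < a f})
    (lam : ℝ) (hlam : M / (1 - ε) ≤ lam) :
    A ⊆ Metric.closedBall (lam • inclusionInDoubleDual ℝ X x₀)
        (lam - d * (1 - ε) / (1 + ε)) ∧
    (0 : StrongDual ℝ (StrongDual ℝ X)) ∉ Metric.closedBall (lam • inclusionInDoubleDual ℝ X x₀)
        (lam - d * (1 - ε) / (1 + ε)) := by
  have hJ (x : X) : ‖inclusionInDoubleDual ℝ X x‖ = ‖x‖ := (inclusionInDoubleDualLi ℝ).norm_map x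
  obtain ⟨f₀, hf₀, hf₀x₀⟩ := exists_dual_vector ℝ x₀ (hx₀.trans_ne one_ne_zero)
  refine ⟨fun a ha => ?_, fun h0 => ?_⟩
  · have hslice f (hf : ‖f‖ ≤ 1) (hεf : ε < inclusionInDoubleDual ℝ X x₀ f) : 0 < a f :=
      (h ⟨hf, hεf⟩).2 a ha
    have haM : ‖a‖ ≤ lam * (1 - ε) := (hM a ha).trans ((div_le_iff₀ (by linarith)).1 hlam)
    have hφf₀ : inclusionInDoubleDual ℝ X x₀ f₀ = 1 := by simp [hf₀x₀, hx₀]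
    refine (dist_eq_norm a _).trans_le <|
      (StrongDual.norm_sub_smul_le hslice (hJ x₀ ▸ hx₀).le hf₀.le hφf₀ hε0.le hε1 haM).trans ?_
    gcongr
    exact hdA a ha
  · replace h0 : ‖lam • inclusionInDoubleDual ℝ X x₀‖ ≤ lam - d * (1 - ε) / (1 + ε) :=
      (dist_zero_left (lam • inclusionInDoubleDual ℝ X x₀)).symm.trans_le h0
    rw [← map_smul, hJ, norm_smul, hx₀, mul_one, Real.norm_eq_abs] at h0
    have hr : 0 < d * (1 - ε) / (1 + ε) := div_pos (mul_pos hd (by linarith)) (by linarith)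
    linarith [le_abs_self lam]

/-- Converse direction of the ball construction: if a w*-slice of `B(X*)` is contained
in the set of functionals positive on `A`, then for every `λ ≥ M/(1-ε)` the set `A` is
contained in the closed ball `B**[λx₀, λ - d(1-ε)/(1+ε)]`, which misses `0`. -/
theorem stmt_3 {X : Type*} [NormedAddCommGroup X] [NormedSpace ℝ X] [CompleteSpace X]
    (A : Set (StrongDual ℝ (StrongDual ℝ X))) (d M ε : ℝ) (x₀ : X)
    (hd : 0 < d) (hdA : ∀ a ∈ A, d ≤ ‖a‖) (hM : ∀ a ∈ A, ‖a‖ ≤ M)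
    (hx₀ : ‖x₀‖ = 1) (hε0 : 0 < ε) (hε1 : ε < 1)
    (h : {f : StrongDual ℝ X | ‖f‖ ≤ 1 ∧ ε < f x₀} ⊆
      {f : StrongDual ℝ X | ‖f‖ ≤ 1 ∧ ∀ a ∈ A, 0 < a f})
    (lam : ℝ) (hlam : M / (1 - ε) ≤ lam) :
    A ⊆ Metric.closedBall (lam • inclusionInDoubleDual ℝ X x₀)
        (lam - d * (1 - ε) / (1 + ε)) ∧
    (0 : StrongDual ℝ (StrongDual ℝ X)) ∉ Metric.closedBall (lam • inclusionInDoubleDual ℝ X x₀)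
        (lam - d * (1 - ε) / (1 + ε)) :=
  stmt_3_general A d M ε x₀ hd hdA hM hx₀ hε0 hε1 h lam hlam
end

section
/- Let X be a real Banach space, x ∈ S(X), and α, δ > 0. Define d₁(x, δ) = sup over 0 < λ < δ and y ∈ B(X) of (‖x + λy‖ + ‖x − λy‖ − 2)/λ, and d₂(x, α) = diam{f ∈ B(X*) : f(x) > 1 − α}. Then d₂(x, α) ≤ d₁(x, δ) + 2α/δ. -/
/-!
If `f` and `g` lie in the weak*-slice determined by `x` with parameter `α`, then for every `λ`
and every `y ∈ B(X)`,
`f x + g x + λ (f - g) y = f (x + λ y) + g (x - λ y) ≤ ‖x + λ y‖ + ‖x - λ y‖`,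
and `f x + g x > 2 - 2α`. Dividing by `0 < λ < δ` bounds `(f - g) y` by `d₁(x, δ) + 2α/λ`;
letting `λ → δ` and taking the supremum over `y ∈ B(X)` bounds `‖f - g‖`.
-/

section

variable {X : Type*} [NormedAddCommGroup X] [NormedSpace ℝ X]

/-- The set whose supremum is `d₁(x, δ)`. -/
def roughnessQuotients (x : X) (δ : ℝ) : Set ℝ :=
  {r : ℝ | ∃ lam : ℝ, ∃ y : X, 0 < lam ∧ lam < δ ∧ ‖y‖ ≤ 1 ∧
    r = (‖x + lam • y‖ + ‖x - lam • y‖ - 2) / lam}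

theorem roughnessQuotients_bddAbove {x : X} (hx : ‖x‖ ≤ 1) (δ : ℝ) :
    BddAbove (roughnessQuotients x δ) := by
  refine ⟨2, ?_⟩
  rintro _ ⟨lam, y, hlam, -, hy, rfl⟩
  have hly : ‖lam • y‖ ≤ lam := by
    rw [norm_smul, Real.norm_of_nonneg hlam.le]
    exact mul_le_of_le_one_right hlam.le hy
  rw [div_le_iff₀ hlam]
  linarith [norm_add_le x (lam • y), norm_sub_le x (lam • y)]

theorem zero_mem_roughnessQuotients {x : X} (hx : ‖x‖ = 1) {δ : ℝ} (hδ : 0 < δ) :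
    (0 : ℝ) ∈ roughnessQuotients x δ :=
  ⟨δ / 2, 0, by positivity, by linarith, by simp, by norm_num [hx]⟩

theorem StrongDual.apply_le_norm {f : StrongDual ℝ X} (hf : ‖f‖ ≤ 1) (v : X) : f v ≤ ‖v‖ :=
  (le_abs_self _).trans <| by simpa using f.le_of_opNorm_le hf v

theorem StrongDual.norm_le_of_forall_apply_le {φ : StrongDual ℝ X} {C : ℝ} (hC : 0 ≤ C)
    (h : ∀ y : X, ‖y‖ ≤ 1 → φ y ≤ C) : ‖φ‖ ≤ C :=
  φ.opNorm_le_of_unit_norm hC fun y hy =>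
    abs_le.2 ⟨by linarith [h (-y) (by rw [norm_neg, hy]), map_neg φ y], h y hy.le⟩

theorem mul_sub_apply_le_of_mem_slice {x : X} {α : ℝ} {f g : StrongDual ℝ X}
    (hf : ‖f‖ ≤ 1) (hfx : 1 - α < f x) (hg : ‖g‖ ≤ 1) (hgx : 1 - α < g x) (lam : ℝ) (y : X) :
    lam * (f y - g y) ≤ ‖x + lam • y‖ + ‖x - lam • y‖ - 2 + 2 * α := by
  have hfy : f (x + lam • y) = f x + lam * f y := by simp
  have hgy : g (x - lam • y) = g x - lam * g y := by simp
  linarith [StrongDual.apply_le_norm hf (x + lam • y), StrongDual.apply_le_norm hg (x - lam • y)]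

end

theorem mul_le_of_forall_lt_mul_le {a b δ : ℝ} (hδ : 0 < δ)
    (h : ∀ lam, 0 < lam → lam < δ → lam * a ≤ b) : δ * a ≤ b := by
  have hIcc : Set.Icc 0 δ ⊆ {lam | lam * a ≤ b} := by
    rw [← closure_Ioo hδ.ne, (isClosed_le (by fun_prop) continuous_const).closure_subset_iff]
    exact fun lam hlam => h lam hlam.1 hlam.2
  exact hIcc ⟨hδ.le, le_rfl⟩

theorem stmt_4_general {X : Type*} [NormedAddCommGroup X] [NormedSpace ℝ X]
    (x : X) (hx : ‖x‖ = 1) (α δ : ℝ) (hα : 0 < α) (hδ : 0 < δ) :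
    Metric.diam {f : StrongDual ℝ X | ‖f‖ ≤ 1 ∧ 1 - α < f x} ≤
      sSup {r : ℝ | ∃ lam : ℝ, ∃ y : X, 0 < lam ∧ lam < δ ∧ ‖y‖ ≤ 1 ∧
        r = (‖x + lam • y‖ + ‖x - lam • y‖ - 2) / lam} + 2 * α / δ := by
  change _ ≤ sSup (roughnessQuotients x δ) + _
  set d₁ := sSup (roughnessQuotients x δ)
  have hbdd := roughnessQuotients_bddAbove hx.le δ
  have hd₁ : 0 ≤ d₁ := le_csSup hbdd (zero_mem_roughnessQuotients hx hδ)
  have hC : 0 ≤ d₁ + 2 * α / δ := by positivity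
  refine Metric.diam_le_of_forall_dist_le hC ?_
  rintro f ⟨hf, hfx⟩ g ⟨hg, hgx⟩
  rw [dist_eq_norm]
  refine StrongDual.norm_le_of_forall_apply_le hC fun y hy => ?_
  suffices δ * (f y - g y - d₁) ≤ 2 * α by
    rw [sub_apply, add_div' _ _ _ hδ.ne', le_div_iff₀' hδ]
    linarith
  refine mul_le_of_forall_lt_mul_le hδ fun lam hlam hlamδ => ?_
  have hq : (‖x + lam • y‖ + ‖x - lam • y‖ - 2) / lam ≤ d₁ :=
    le_csSup hbdd ⟨lam, y, hlam, hlamδ, hy, rfl⟩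
  rw [div_le_iff₀' hlam] at hq
  linarith [mul_sub_apply_le_of_mem_slice hf hfx hg hgx lam y]

/-- Lemma: `d₂(x, α) ≤ d₁(x, δ) + 2α/δ`. -/
theorem stmt_4 {X : Type*} [NormedAddCommGroup X] [NormedSpace ℝ X] [CompleteSpace X]
    (x : X) (hx : ‖x‖ = 1) (α δ : ℝ) (hα : 0 < α) (hδ : 0 < δ) :
    Metric.diam {f : StrongDual ℝ X | ‖f‖ ≤ 1 ∧ 1 - α < f x} ≤
      sSup {r : ℝ | ∃ lam : ℝ, ∃ y : X, 0 < lam ∧ lam < δ ∧ ‖y‖ ≤ 1 ∧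
        r = (‖x + lam • y‖ + ‖x - lam • y‖ - 2) / lam} + 2 * α / δ :=
  stmt_4_general x hx α δ hα hδ
end

section
/- Let X be a real Banach space, x ∈ S(X), and δ > 0. Then d₁(x, δ) ≤ d₃(x, 2δ), where d₁(x, δ) = sup over 0 < λ < δ, y ∈ B(X) of (‖x + λy‖ + ‖x − λy‖ − 2)/λ, and d₃(x, 2δ) = diam D(S(X) ∩ B(x, 2δ)). -/
/-!
Fix `0 < λ < δ` and `‖y‖ ≤ 1`, and put `u = x + λy`, `v = x - λy`. If the quotient
`(‖u‖ + ‖v‖ - 2) / λ` is positive, then `u, v ≠ 0`; their normalizations are unit vectors within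
`2λ < 2δ` of `x`, so support functionals `f` of `u` and `g` of `v` both lie in
`D(S(X) ∩ B(x, 2δ))`. Since `f x, g x ≤ 1`, evaluating `f` at `u` and `g` at `v` gives
`‖u‖ + ‖v‖ ≤ 2 + λ (f - g) y`, so the quotient is at most `‖f - g‖`.
-/

lemma ne_zero_and_ne_zero_of_norm_add_lt {E : Type*} [SeminormedAddGroup E] {u v : E}
    (h : ‖u + v‖ < ‖u‖ + ‖v‖) : u ≠ 0 ∧ v ≠ 0 := by
  constructor <;> rintro rfl <;> simp at h

section

variable {X : Type*} [NormedAddCommGroup X] [NormedSpace ℝ X]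

lemma norm_inv_norm_smul_sub_le {x : X} (hx : ‖x‖ = 1) (u : X) :
    ‖‖u‖⁻¹ • u - x‖ ≤ 2 * ‖u - x‖ := by
  have hnormalize : ‖‖u‖⁻¹ • u - u‖ ≤ |1 - ‖u‖| := by
    rcases eq_or_ne u 0 with rfl | hu
    · simp
    have hpos : 0 < ‖u‖ := norm_pos_iff.mpr hu
    refine le_of_eq ?_
    calc ‖‖u‖⁻¹ • u - u‖ = |‖u‖⁻¹ - 1| * ‖u‖ := by
          rw [← Real.norm_eq_abs, ← norm_smul, sub_smul, one_smul]
      _ = |1 - ‖u‖| := by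
          rw [← abs_of_pos hpos, ← abs_mul, abs_of_pos hpos, sub_mul,
            inv_mul_cancel₀ hpos.ne', one_mul]
  have hdist : |1 - ‖u‖| ≤ ‖u - x‖ := by
    rw [← hx, abs_sub_comm]
    exact abs_norm_sub_norm_le u x
  calc ‖‖u‖⁻¹ • u - x‖ = ‖(‖u‖⁻¹ • u - u) + (u - x)‖ := by rw [sub_add_sub_cancel]
    _ ≤ ‖‖u‖⁻¹ • u - u‖ + ‖u - x‖ := norm_add_le _ _
    _ ≤ 2 * ‖u - x‖ := by linarith

lemma exists_dual_vector_mem_support_near {x u : X} (hx : ‖x‖ = 1) (hu : u ≠ 0) {ε : ℝ}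
    (hε : 2 * ‖u - x‖ < ε) :
    ∃ f : StrongDual ℝ X, f u = ‖u‖ ∧
      f ∈ {f : StrongDual ℝ X | ‖f‖ = 1 ∧ ∃ z : X, ‖z‖ = 1 ∧ ‖z - x‖ < ε ∧ f z = 1} := by
  obtain ⟨f, hf_norm, hfu⟩ := exists_dual_vector ℝ u (norm_ne_zero_iff.mpr hu)
  replace hfu : f u = ‖u‖ := hfu
  have hpos : 0 < ‖u‖ := norm_pos_iff.mpr hu
  refine ⟨f, hfu, hf_norm, ‖u‖⁻¹ • u, norm_smul_inv_norm hu,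
    (norm_inv_norm_smul_sub_le hx u).trans_lt hε, ?_⟩
  rw [map_smul, smul_eq_mul, hfu, inv_mul_cancel₀ hpos.ne']

lemma norm_add_smul_add_norm_sub_smul_sub_two_div_le {x y : X} (hx : ‖x‖ = 1) {t : ℝ}
    (ht : 0 < t) {f g : StrongDual ℝ X} (hf : ‖f‖ = 1) (hg : ‖g‖ = 1)
    (hfu : f (x + t • y) = ‖x + t • y‖) (hgv : g (x - t • y) = ‖x - t • y‖) :
    (‖x + t • y‖ + ‖x - t • y‖ - 2) / t ≤ (f - g) y := by
  have hfx : f x ≤ 1 := by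
    simpa [hf, hx] using (le_abs_self (f x)).trans (f.le_opNorm x)
  have hgx : g x ≤ 1 := by
    simpa [hg, hx] using (le_abs_self (g x)).trans (g.le_opNorm x)
  rw [← hfu, ← hgv, div_le_iff₀ ht]
  simp only [map_add, map_sub, map_smul, smul_eq_mul, sub_apply]
  linarith

end

theorem stmt_6_general {X : Type*} [NormedAddCommGroup X] [NormedSpace ℝ X]
    (x : X) (hx : ‖x‖ = 1) (δ : ℝ) :
    sSup {r : ℝ | ∃ lam : ℝ, ∃ y : X, 0 < lam ∧ lam < δ ∧ ‖y‖ ≤ 1 ∧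
        r = (‖x + lam • y‖ + ‖x - lam • y‖ - 2) / lam} ≤
      Metric.diam {f : StrongDual ℝ X | ‖f‖ = 1 ∧
        ∃ z : X, ‖z‖ = 1 ∧ ‖z - x‖ < 2 * δ ∧ f z = 1} := by
  refine Real.sSup_le ?_ Metric.diam_nonneg
  rintro _ ⟨lam, y, hlam, hlamδ, hy, rfl⟩
  rcases le_or_gt ((‖x + lam • y‖ + ‖x - lam • y‖ - 2) / lam) 0 with hq | hq
  · exact hq.trans Metric.diam_nonneg
  have hsum : ‖(x + lam • y) + (x - lam • y)‖ < ‖x + lam • y‖ + ‖x - lam • y‖ := by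
    have : (x + lam • y) + (x - lam • y) = (2 : ℝ) • x := by module
    rw [this, norm_smul, hx, Real.norm_two, mul_one]
    linarith [(div_pos_iff_of_pos_right hlam).mp hq]
  obtain ⟨hu, hv⟩ := ne_zero_and_ne_zero_of_norm_add_lt hsum
  have hstep : ‖lam • y‖ ≤ lam := by
    rw [norm_smul, Real.norm_of_nonneg hlam.le]
    exact mul_le_of_le_one_right hlam.le hy
  obtain ⟨f, hfu, hfD⟩ := exists_dual_vector_mem_support_near hx hu (ε := 2 * δ)
    (by rw [add_sub_cancel_left]; linarith)
  obtain ⟨g, hgv, hgD⟩ := exists_dual_vector_mem_support_near hx hv (ε := 2 * δ)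
    (by rw [sub_sub_cancel_left, norm_neg]; linarith)
  have hbdd : Bornology.IsBounded {f : StrongDual ℝ X | ‖f‖ = 1 ∧
      ∃ z : X, ‖z‖ = 1 ∧ ‖z - x‖ < 2 * δ ∧ f z = 1} :=
    (Metric.isBounded_sphere (x := 0) (r := 1)).subset fun h hh => by simpa using hh.1
  calc (‖x + lam • y‖ + ‖x - lam • y‖ - 2) / lam ≤ (f - g) y :=
        norm_add_smul_add_norm_sub_smul_sub_two_div_le hx hlam hfD.1 hgD.1 hfu hgv
    _ ≤ ‖f - g‖ := (le_abs_self _).trans ((f - g).le_opNorm_of_le hy |>.trans_eq (mul_one _))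
    _ = dist f g := (dist_eq_norm f g).symm
    _ ≤ _ := Metric.dist_le_diam_of_mem hbdd hfD hgD

/-- Lemma: `d₁(x, δ) ≤ d₃(x, 2δ)`. -/
theorem stmt_6 {X : Type*} [NormedAddCommGroup X] [NormedSpace ℝ X] [CompleteSpace X]
    (x : X) (hx : ‖x‖ = 1) (δ : ℝ) (hδ : 0 < δ) :
    sSup {r : ℝ | ∃ lam : ℝ, ∃ y : X, 0 < lam ∧ lam < δ ∧ ‖y‖ ≤ 1 ∧
        r = (‖x + lam • y‖ + ‖x - lam • y‖ - 2) / lam} ≤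
      Metric.diam {f : StrongDual ℝ X | ‖f‖ = 1 ∧
        ∃ z : X, ‖z‖ = 1 ∧ ‖z - x‖ < 2 * δ ∧ f z = 1} :=
  stmt_6_general x hx δ
end

section
/- Let X be a real Banach space in which every f ∈ S(X*) is uniformly w*-semidenting: for every ε > 0 there exists 0 < δ < 1 such that for any f ∈ S(X*) there is x ∈ S(X) with S(B(X*), x, δ) ⊆ B(f, ε). Then the duality map is uniformly quasicontinuous: for every ε > 0 there exists δ > 0 such that for any f ∈ S(X*) there is x ∈ S(X) with D(S(X) ∩ B(x, δ)) ⊆ B(f, ε). -/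
open NormedSpace

section

variable {X : Type*} [NormedAddCommGroup X] [NormedSpace ℝ X]

/-- The weak*-slice `S(B(X*), x, δ)`. -/
def weakStarSlice (x : X) (δ : ℝ) : Set (StrongDual ℝ X) :=
  {g | ‖g‖ ≤ 1 ∧ 1 - δ < g x}

/-- The image `D(S(X) ∩ B(x, δ))` of the duality map. -/
def dualityImageNear (x : X) (δ : ℝ) : Set (StrongDual ℝ X) :=
  {g | ‖g‖ = 1 ∧ ∃ z : X, ‖z‖ = 1 ∧ ‖z - x‖ < δ ∧ g z = 1}

lemma StrongDual.apply_sub_norm_mul_le (g : StrongDual ℝ X) (x z : X) :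
    g z - ‖g‖ * ‖z - x‖ ≤ g x := by
  have h : g (z - x) ≤ ‖g‖ * ‖z - x‖ := (le_abs_self _).trans (g.le_opNorm _)
  rw [map_sub] at h
  linarith

lemma dualityImageNear_subset_weakStarSlice (x : X) (δ : ℝ) :
    dualityImageNear x δ ⊆ weakStarSlice x δ := by
  rintro g ⟨hg, z, -, hzx, hgz⟩
  refine ⟨hg.le, ?_⟩
  have := g.apply_sub_norm_mul_le x z
  rw [hg, hgz, one_mul] at this
  linarith

end

theorem stmt_8_general {X : Type*} [NormedAddCommGroup X] [NormedSpace ℝ X]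
    (h : ∀ ε : ℝ, 0 < ε → ∃ δ : ℝ, 0 < δ ∧ δ < 1 ∧
      ∀ f : StrongDual ℝ X, ‖f‖ = 1 → ∃ x : X, ‖x‖ = 1 ∧
        {g : StrongDual ℝ X | ‖g‖ ≤ 1 ∧ 1 - δ < g x} ⊆ Metric.ball f ε) :
    ∀ ε : ℝ, 0 < ε → ∃ δ : ℝ, 0 < δ ∧
      ∀ f : StrongDual ℝ X, ‖f‖ = 1 → ∃ x : X, ‖x‖ = 1 ∧
        {g : StrongDual ℝ X | ‖g‖ = 1 ∧ ∃ z : X, ‖z‖ = 1 ∧ ‖z - x‖ < δ ∧ g z = 1} ⊆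
          Metric.ball f ε := by
  intro ε hε
  obtain ⟨δ, hδ, -, hslice⟩ := h ε hε
  refine ⟨δ, hδ, fun f hf => ?_⟩
  obtain ⟨x, hx, hsub⟩ := hslice f hf
  exact ⟨x, hx, (dualityImageNear_subset_weakStarSlice x δ).trans hsub⟩

/-- If every norm-one functional is uniformly w*-semidenting, then the duality map
is uniformly quasicontinuous. -/
theorem stmt_8 {X : Type*} [NormedAddCommGroup X] [NormedSpace ℝ X] [CompleteSpace X]
    (h : ∀ ε : ℝ, 0 < ε → ∃ δ : ℝ, 0 < δ ∧ δ < 1 ∧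
      ∀ f : StrongDual ℝ X, ‖f‖ = 1 → ∃ x : X, ‖x‖ = 1 ∧
        {g : StrongDual ℝ X | ‖g‖ ≤ 1 ∧ 1 - δ < g x} ⊆ Metric.ball f ε) :
    ∀ ε : ℝ, 0 < ε → ∃ δ : ℝ, 0 < δ ∧
      ∀ f : StrongDual ℝ X, ‖f‖ = 1 → ∃ x : X, ‖x‖ = 1 ∧
        {g : StrongDual ℝ X | ‖g‖ = 1 ∧ ∃ z : X, ‖z‖ = 1 ∧ ‖z - x‖ < δ ∧ g z = 1} ⊆
          Metric.ball f ε :=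
  stmt_8_general h
end

section
/- Let X be a real Banach space satisfying: for every ε > 0 there exists δ > 0 such that for every f ∈ S(X*) there exists x ∈ S(X) with d₁(x, δ) < ε and D(x) ⊆ B(f, ε) (condition (e)). Then every f ∈ S(X*) is uniformly w*-semidenting: for every ε > 0 there exists α > 0 such that for any f ∈ S(X*) there is x ∈ S(X) with S(B(X*), x, α) ⊆ B(f, ε). -/
/-!
If `φ` is a norm-one functional attaining its norm at the unit vector `x`, and `g` is in the
unit ball with `g x > 1 - α`, then testing `g` at `x + λy` and `φ` at `x - λy` gives
`λ (g y - φ y) ≤ ‖x + λy‖ + ‖x - λy‖ - 2 + α`. Hence a small smoothness modulus `d₁(x, δ)`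
makes the whole slice `S(B(X*), x, α)` lie close to `φ`, which condition (e) places close to `f`.
-/

open NormedSpace

section

variable {X : Type*} [NormedAddCommGroup X] [NormedSpace ℝ X]

/-- The modulus `d₁(x, δ)` of the paper. -/
noncomputable def smoothnessModulus (x : X) (δ : ℝ) : ℝ :=
  sSup {r : ℝ | ∃ lam : ℝ, ∃ y : X, 0 < lam ∧ lam < δ ∧ ‖y‖ ≤ 1 ∧
    r = (‖x + lam • y‖ + ‖x - lam • y‖ - 2) / lam}

theorem norm_add_add_norm_sub_sub_two_le {x y : X} {δ lam : ℝ} (hx : ‖x‖ ≤ 1)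
    (hlam : 0 < lam) (hlamδ : lam < δ) (hy : ‖y‖ ≤ 1) :
    ‖x + lam • y‖ + ‖x - lam • y‖ - 2 ≤ lam * smoothnessModulus x δ := by
  have hbdd : BddAbove {r : ℝ | ∃ lam : ℝ, ∃ y : X, 0 < lam ∧ lam < δ ∧ ‖y‖ ≤ 1 ∧
      r = (‖x + lam • y‖ + ‖x - lam • y‖ - 2) / lam} := by
    refine ⟨2, ?_⟩
    rintro r ⟨lam, y, hlam, -, hy, rfl⟩
    have hly : ‖lam • y‖ ≤ lam := by
      rw [norm_smul, Real.norm_of_nonneg hlam.le]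
      exact mul_le_of_le_one_right hlam.le hy
    rw [div_le_iff₀ hlam]
    linarith [norm_add_le x (lam • y), norm_sub_le x (lam • y)]
  rw [← div_le_iff₀' hlam]
  exact le_csSup hbdd ⟨lam, y, hlam, hlamδ, hy, rfl⟩

end

namespace StrongDual

variable {X : Type*} [NormedAddCommGroup X] [NormedSpace ℝ X]

theorem norm_le_of_forall_norm_le_one_apply_le {h : StrongDual ℝ X} {C : ℝ}
    (hC : ∀ y : X, ‖y‖ ≤ 1 → h y ≤ C) : ‖h‖ ≤ C := by
  have hC₀ : 0 ≤ C := by simpa using hC 0 (by simp)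
  refine ContinuousLinearMap.opNorm_le_of_unit_norm hC₀ fun y hy => ?_
  have hneg : -h y ≤ C := by simpa using hC (-y) (by rw [norm_neg, hy])
  exact abs_le.mpr ⟨by linarith, hC y hy.le⟩

theorem apply_sub_apply_le {x y : X} {g φ : StrongDual ℝ X} (hg : ‖g‖ ≤ 1) (hφ : ‖φ‖ ≤ 1)
    (hφx : φ x = 1) {lam c : ℝ} (hlam : 0 < lam)
    (hc : ‖x + lam • y‖ + ‖x - lam • y‖ - 2 ≤ lam * c) :
    g y - φ y ≤ c + (1 - g x) / lam := by
  have hg' : g (x + lam • y) ≤ ‖x + lam • y‖ :=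
    (le_abs_self _).trans (g.le_of_opNorm_le hg _ |>.trans_eq (one_mul _))
  have hφ' : φ (x - lam • y) ≤ ‖x - lam • y‖ :=
    (le_abs_self _).trans (φ.le_of_opNorm_le hφ _ |>.trans_eq (one_mul _))
  simp only [map_add, map_sub, map_smul, smul_eq_mul, hφx] at hg' hφ'
  rw [← sub_le_iff_le_add', le_div_iff₀ hlam]
  linarith

/-- The paper's `d₂(x, α) ≤ d₁(x, δ) + 2α/δ`, with `α = 1 - g x`. -/
theorem norm_sub_le_smoothnessModulus_add {x : X} {g φ : StrongDual ℝ X} {δ : ℝ} (hδ : 0 < δ)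
    (hx : ‖x‖ ≤ 1) (hg : ‖g‖ ≤ 1) (hφ : ‖φ‖ ≤ 1) (hφx : φ x = 1) :
    ‖g - φ‖ ≤ smoothnessModulus x δ + 2 * (1 - g x) / δ := by
  refine norm_le_of_forall_norm_le_one_apply_le fun y hy => ?_
  have hd := norm_add_add_norm_sub_sub_two_le (δ := δ) hx (half_pos hδ) (half_lt_self hδ) hy
  have key := apply_sub_apply_le hg hφ hφx (half_pos hδ) hd
  rw [div_div_eq_mul_div, mul_comm (1 - g x)] at key
  simpa using key

end StrongDual

theorem stmt_9_general {X : Type*} [NormedAddCommGroup X] [NormedSpace ℝ X]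
    (h : ∀ ε : ℝ, 0 < ε → ∃ δ : ℝ, 0 < δ ∧
      ∀ f : StrongDual ℝ X, ‖f‖ = 1 → ∃ x : X, ‖x‖ = 1 ∧
        sSup {r : ℝ | ∃ lam : ℝ, ∃ y : X, 0 < lam ∧ lam < δ ∧ ‖y‖ ≤ 1 ∧
          r = (‖x + lam • y‖ + ‖x - lam • y‖ - 2) / lam} < ε ∧
        {g : StrongDual ℝ X | ‖g‖ = 1 ∧ g x = 1} ⊆ Metric.ball f ε) :
    ∀ ε : ℝ, 0 < ε → ∃ α : ℝ, 0 < α ∧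
      ∀ f : StrongDual ℝ X, ‖f‖ = 1 → ∃ x : X, ‖x‖ = 1 ∧
        {g : StrongDual ℝ X | ‖g‖ ≤ 1 ∧ 1 - α < g x} ⊆ Metric.ball f ε := by
  intro ε hε
  obtain ⟨δ, hδ, hδf⟩ := h (ε / 4) (by positivity)
  refine ⟨δ * ε / 8, by positivity, fun f hf => ?_⟩
  obtain ⟨x, hx, hsmooth, hD⟩ := hδf f hf
  refine ⟨x, hx, fun g ⟨hg, hgx⟩ => ?_⟩
  obtain ⟨φ, hφ, hφx⟩ := exists_dual_vector ℝ x (by simp [hx])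
  rw [hx] at hφx
  have hφf : dist φ f < ε / 4 := hD ⟨hφ, hφx⟩
  have hgφ := StrongDual.norm_sub_le_smoothnessModulus_add hδ hx.le hg hφ.le hφx
  have hslice : 2 * (1 - g x) / δ < ε / 4 := by
    rw [div_lt_iff₀ hδ]; linarith
  rw [Metric.mem_ball]
  calc dist g f ≤ ‖g - φ‖ + dist φ f := dist_eq_norm g φ ▸ dist_triangle g φ f
    _ < ε := by linarith [show smoothnessModulus x δ < ε / 4 from hsmooth]

/-- Condition (e) implies that every norm-one functional is uniformly w*-semidenting. -/
theorem stmt_9 {X : Type*} [NormedAddCommGroup X] [NormedSpace ℝ X] [CompleteSpace X]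
    (h : ∀ ε : ℝ, 0 < ε → ∃ δ : ℝ, 0 < δ ∧
      ∀ f : StrongDual ℝ X, ‖f‖ = 1 → ∃ x : X, ‖x‖ = 1 ∧
        sSup {r : ℝ | ∃ lam : ℝ, ∃ y : X, 0 < lam ∧ lam < δ ∧ ‖y‖ ≤ 1 ∧
          r = (‖x + lam • y‖ + ‖x - lam • y‖ - 2) / lam} < ε ∧
        {g : StrongDual ℝ X | ‖g‖ = 1 ∧ g x = 1} ⊆ Metric.ball f ε) :
    ∀ ε : ℝ, 0 < ε → ∃ α : ℝ, 0 < α ∧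
      ∀ f : StrongDual ℝ X, ‖f‖ = 1 → ∃ x : X, ‖x‖ = 1 ∧
        {g : StrongDual ℝ X | ‖g‖ ≤ 1 ∧ 1 - α < g x} ⊆ Metric.ball f ε :=
  stmt_9_general h
end

section
/- Let X be a Banach space with the UMIP: for every ε > 0 and M(ε) ≥ 2 there is K(ε) > 0 such that whenever a closed convex set C ⊆ X and p ∈ X satisfy diam(C) ≤ M(ε) and d(p, C) ≥ ε, there is a closed ball B of radius ≤ K(ε) with C ⊆ B and d(p, B) ≥ ε/2. Then every f ∈ S(X*) is uniformly w*-semidenting: for every ε ∈ (0,1) there exists 0 < δ < 1 such that for all f ∈ S(X*) there exists x ∈ S(X) with S(B(X*), x, δ) ⊆ B(f, ε). Explicitly, if K ≥ 1 is the UMIP constant for ε/3, one may take δ = 1 − K/(K + ε/9). -/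
open NormedSpace

lemma aux_opNorm_le_of_unit {X : Type*} [NormedAddCommGroup X] [NormedSpace ℝ X]
    (T : StrongDual ℝ X) {c : ℝ} (hc : 0 ≤ c)
    (h : ∀ z : X, ‖z‖ ≤ 1 → ‖T z‖ ≤ c) : ‖T‖ ≤ c := by
  refine T.opNorm_le_bound hc fun z => ?_
  rcases eq_or_ne z 0 with rfl | hz
  · simp
  · have hzpos : 0 < ‖z‖ := norm_pos_iff.2 hz
    have hu : ‖(‖z‖⁻¹ • z)‖ ≤ 1 := by
      rw [norm_smul, norm_inv, norm_norm, inv_mul_cancel₀ hzpos.ne']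
    have h2 := h _ hu
    rw [map_smul, norm_smul, norm_inv, norm_norm] at h2
    calc ‖T z‖ = ‖z‖ * (‖z‖⁻¹ * ‖T z‖) := by field_simp
    _ ≤ ‖z‖ * c := by exact mul_le_mul_of_nonneg_left h2 hzpos.le
    _ = c * ‖z‖ := mul_comm _ _

lemma aux_exists_unit {X : Type*} [NormedAddCommGroup X] [NormedSpace ℝ X]
    (f : StrongDual ℝ X) (hf : ‖f‖ = 1) {b : ℝ} (hb0 : 0 ≤ b) (hb : b < 1) :
    ∃ y : X, ‖y‖ ≤ 1 ∧ b < f y := by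
  by_contra h
  push_neg at h
  have hle : ‖f‖ ≤ b := by
    refine aux_opNorm_le_of_unit f hb0 fun z hz => ?_
    rw [Real.norm_eq_abs, abs_le]
    constructor
    · have := h (-z) (by rwa [norm_neg])
      rw [map_neg] at this; linarith
    · exact h z hz
  rw [hf] at hle; linarith


lemma aux_claimA {X : Type*} [NormedAddCommGroup X] [NormedSpace ℝ X]
    (f g : StrongDual ℝ X) (hf : ‖f‖ = 1) (hg : ‖g‖ ≤ 1) {e : ℝ} (he : 0 < e) (he6 : e ≤ 1/6)
    {y : X} (hy : ‖y‖ ≤ 1) (hfy : 1 - e/3 < f y)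
    (pos : ∀ z : X, ‖z‖ ≤ 1 → e ≤ f z → 0 < g z) :
    0 < g y ∧ ∀ z : X, ‖z‖ ≤ 1 → |g z - f z * g y| ≤ 3*e * g y := by
  have hfy1 : f y ≤ 1 := by
    have h1 : ‖f y‖ ≤ ‖f‖ * ‖y‖ := f.le_opNorm y
    rw [hf, one_mul, Real.norm_eq_abs] at h1
    have := le_abs_self (f y)
    linarith
  have H : ∀ u : X, ‖u‖ ≤ 2 → |f u| ≤ e/3 → 0 < 3*e * g y + g u := by
    intro u hu hfu
    set w := (3*e+2)⁻¹ • ((3*e) • y + u) with hw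
    have hden : (0:ℝ) < 3*e+2 := by linarith
    have hwnorm : ‖w‖ ≤ 1 := by
      rw [hw, norm_smul, Real.norm_eq_abs, abs_of_pos (inv_pos.2 hden)]
      have h1 : ‖(3*e) • y + u‖ ≤ 3*e + 2 := by
        refine (norm_add_le _ _).trans ?_
        rw [norm_smul, Real.norm_eq_abs, abs_of_pos (by linarith : (0:ℝ) < 3*e)]
        nlinarith
      calc (3*e+2)⁻¹ * ‖(3*e) • y + u‖ ≤ (3*e+2)⁻¹ * (3*e+2) :=
            mul_le_mul_of_nonneg_left h1 (inv_pos.2 hden).le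
      _ = 1 := inv_mul_cancel₀ hden.ne'
    have hfw : e ≤ f w := by
      have hq : f w = (3*e+2)⁻¹ * ((3*e) * f y + f u) := by
        rw [hw]; simp [map_add, map_smul, smul_eq_mul]; ring
      rw [hq, inv_mul_eq_div, le_div_iff₀ hden]
      have h2 : -(e/3) ≤ f u := (abs_le.mp hfu).1
      nlinarith
    have hgw := pos w hwnorm hfw
    have hq : g w = (3*e+2)⁻¹ * ((3*e) * g y + g u) := by
      rw [hw]; simp [map_add, map_smul, smul_eq_mul]; ring
    rw [hq] at hgw
    nlinarith [inv_pos.2 hden]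
  have hgy : 0 < g y := by
    have h0 := H 0 (by simp) (by simp; linarith)
    simp at h0
    nlinarith
  refine ⟨hgy, fun z hz => ?_⟩
  set t := f z with ht
  have ht1 : |t| ≤ 1 := by
    have h1 : ‖f z‖ ≤ ‖f‖ * ‖z‖ := f.le_opNorm z
    rw [hf, one_mul, Real.norm_eq_abs] at h1
    linarith
  set v := z - t • y with hv
  have hvnorm : ‖v‖ ≤ 2 := by
    rw [hv]
    refine (norm_sub_le _ _).trans ?_
    rw [norm_smul, Real.norm_eq_abs]
    nlinarith [abs_nonneg t]
  have hfv : |f v| ≤ e/3 := by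
    have : f v = t * (1 - f y) := by rw [hv]; simp [map_sub, map_smul, smul_eq_mul]; ring
    rw [this, abs_mul, abs_of_nonneg (by linarith : (0:ℝ) ≤ 1 - f y)]
    nlinarith [abs_nonneg t]
  have h1 := H v hvnorm hfv
  have h2 := H (-v) (by rwa [norm_neg]) (by rw [map_neg, abs_neg]; exact hfv)
  rw [map_neg] at h2
  have hgv : g v = g z - t * g y := by rw [hv]; simp [map_sub, map_smul, smul_eq_mul]
  rw [hgv] at h1 h2
  rw [abs_le]
  constructor <;> linarith



set_option maxHeartbeats 1000000 in
/-- UMIP implies that every norm-one functional is uniformly w*-semidenting. -/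
theorem stmt_10 {X : Type*} [NormedAddCommGroup X] [NormedSpace ℝ X] [CompleteSpace X]
    (umip : ∀ ε : ℝ, 0 < ε → ∀ M : ℝ, 2 ≤ M → ∃ K : ℝ, 0 < K ∧
      ∀ (C : Set X) (p : X), IsClosed C → Convex ℝ C → Bornology.IsBounded C → Metric.diam C ≤ M →
        (∀ z ∈ C, ε ≤ ‖p - z‖) →
        ∃ (c : X) (r : ℝ), r ≤ K ∧ C ⊆ Metric.closedBall c r ∧
          ∀ w ∈ Metric.closedBall c r, ε / 2 ≤ ‖p - w‖) :
    ∀ ε : ℝ, 0 < ε → ε < 1 → ∃ δ : ℝ, 0 < δ ∧ δ < 1 ∧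
      ∀ f : StrongDual ℝ X, ‖f‖ = 1 → ∃ x : X, ‖x‖ = 1 ∧
        {g : StrongDual ℝ X | ‖g‖ ≤ 1 ∧ 1 - δ < g x} ⊆ Metric.ball f ε := by
  intro ε hε hε1
  set e := ε/8 with he_def
  have he : 0 < e := by positivity
  have he6 : e ≤ 1/6 := by rw [he_def]; linarith
  obtain ⟨K₀, hK₀pos, hK₀⟩ := umip e he 2 le_rfl
  set K := max K₀ 1 with hKdef
  have hK1 : (1:ℝ) ≤ K := le_max_right _ _
  set δ := (e/4)/(K + e/2) with hδdef
  have hden : (0:ℝ) < K + e/2 := by linarith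
  have hδpos : 0 < δ := by positivity
  have hδeq : δ * (K + e/2) = e/4 := by
    rw [hδdef, div_mul_cancel₀ _ hden.ne']
  have hδlt : δ < e/4 := by
    rw [hδdef, div_lt_iff₀ hden]; nlinarith
  refine ⟨δ, hδpos, by linarith, ?_⟩
  intro f hf
  -- a point deep in the slice
  obtain ⟨z₀, hz₀n, hz₀f⟩ := aux_exists_unit f hf (le_of_lt he) (by linarith)
  -- the set C
  set C : Set X := Metric.closedBall (0:X) 1 ∩ {z | e ≤ f z} with hC
  have hCclosed : IsClosed C :=
    Metric.isClosed_closedBall.inter (isClosed_le continuous_const f.continuous)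
  have hCconvex : Convex ℝ C := by
    refine (convex_closedBall _ _).inter ?_
    intro u hu v hv a b ha hb hab
    simp only [Set.mem_setOf_eq, map_add, map_smul, smul_eq_mul] at *
    nlinarith
  have hCdiam : Metric.diam C ≤ 2 := by
    refine le_trans (Metric.diam_mono Set.inter_subset_left Metric.isBounded_closedBall) ?_
    have h : Metric.diam (Metric.closedBall (0:X) 1) ≤ 2*1 :=
      Metric.diam_closedBall (by norm_num)
    linarith
  have hCdist : ∀ z ∈ C, e ≤ ‖(0:X) - z‖ := by
    intro z hz
    obtain ⟨hz1, hz2⟩ := hz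
    rw [Metric.mem_closedBall, dist_zero_right] at hz1
    simp only [Set.mem_setOf_eq] at hz2
    have h1 : ‖f z‖ ≤ ‖f‖ * ‖z‖ := f.le_opNorm z
    rw [hf, one_mul, Real.norm_eq_abs] at h1
    have := le_abs_self (f z)
    rw [zero_sub, norm_neg]
    linarith
  obtain ⟨c, r, hrK₀, hsub, hfar⟩ := hK₀ C 0 hCclosed hCconvex (Metric.isBounded_closedBall.subset Set.inter_subset_left) hCdiam hCdist
  have hrK : r ≤ K := hrK₀.trans (le_max_left _ _)
  have hz₀C : z₀ ∈ C := ⟨by simpa [Metric.mem_closedBall, dist_zero_right] using hz₀n, le_of_lt hz₀f⟩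
  have hr0 : 0 ≤ r := le_trans dist_nonneg (hsub hz₀C)
  have hcr : r < ‖c‖ := by
    by_contra hcon
    push_neg at hcon
    have h0 : (0:X) ∈ Metric.closedBall c r := by
      rw [Metric.mem_closedBall, dist_zero_left]; exact hcon
    have := hfar 0 h0
    simp at this
    linarith
  have hcpos : 0 < ‖c‖ := lt_of_le_of_lt hr0 hcr
  have hgap : e/2 ≤ ‖c‖ - r := by
    set w := c - (r * ‖c‖⁻¹) • c with hw
    have hwmem : w ∈ Metric.closedBall c r := by
      rw [Metric.mem_closedBall, dist_eq_norm, hw]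
      have : c - (r * ‖c‖⁻¹) • c - c = -((r * ‖c‖⁻¹) • c) := by abel
      rw [this, norm_neg, norm_smul, Real.norm_eq_abs,
        abs_of_nonneg (by positivity : (0:ℝ) ≤ r * ‖c‖⁻¹)]
      rw [mul_assoc, inv_mul_cancel₀ hcpos.ne', mul_one]
    have h1 := hfar w hwmem
    rw [zero_sub, norm_neg, hw] at h1
    have h2 : c - (r * ‖c‖⁻¹) • c = (1 - r * ‖c‖⁻¹) • c := by
      rw [sub_smul, one_smul]
    rw [h2, norm_smul, Real.norm_eq_abs] at h1
    have h3 : (0:ℝ) ≤ 1 - r * ‖c‖⁻¹ := by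
      rw [sub_nonneg]
      rw [← div_eq_mul_inv, div_le_one hcpos]
      exact hcr.le
    rw [abs_of_nonneg h3, sub_mul, one_mul, mul_assoc, inv_mul_cancel₀ hcpos.ne', mul_one] at h1
    exact h1
  refine ⟨‖c‖⁻¹ • c, by rw [norm_smul, norm_inv, norm_norm, inv_mul_cancel₀ hcpos.ne'], ?_⟩
  rintro g ⟨hg1, hgx⟩
  have hgc : (1 - δ) * ‖c‖ < g c := by
    have h0 : g (‖c‖⁻¹ • c) = ‖c‖⁻¹ * g c := by rw [map_smul, smul_eq_mul]
    have h1 : 1 - δ < ‖c‖⁻¹ * g c := by rw [← h0]; exact hgx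
    calc (1 - δ) * ‖c‖ < (‖c‖⁻¹ * g c) * ‖c‖ :=
          mul_lt_mul_of_pos_right h1 hcpos
    _ = g c := by field_simp
  -- Step 1: positivity on the slice
  have pos : ∀ z : X, ‖z‖ ≤ 1 → e ≤ f z → 0 < g z := by
    intro z hz hfz
    have hzC : z ∈ C := ⟨by simpa [Metric.mem_closedBall, dist_zero_right] using hz, hfz⟩
    have hzball := hsub hzC
    rw [Metric.mem_closedBall, dist_eq_norm] at hzball
    have h1 : g c - g z ≤ r := by
      have h2 : g c - g z = g (c - z) := by rw [map_sub]
      have h3 : ‖g (c - z)‖ ≤ ‖g‖ * ‖c - z‖ := g.le_opNorm _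
      have h4 : ‖c - z‖ = ‖z - c‖ := norm_sub_rev _ _
      rw [Real.norm_eq_abs] at h3
      have := le_abs_self (g (c - z))
      rw [h2]
      calc g (c - z) ≤ |g (c - z)| := le_abs_self _
      _ ≤ ‖g‖ * ‖c - z‖ := h3
      _ ≤ 1 * r := by
            refine mul_le_mul hg1 (by rw [h4]; exact hzball) (norm_nonneg _) zero_le_one
      _ = r := one_mul r
    have A : (1-δ)*(r+e/2) ≤ (1-δ)*‖c‖ :=
      mul_le_mul_of_nonneg_left (by linarith) (by linarith)
    have B : δ*r ≤ δ*K := mul_le_mul_of_nonneg_left hrK hδpos.le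
    nlinarith [A, B, hδeq, hgc, h1]
  -- Step 2: hyperplane estimate
  obtain ⟨y, hyn, hfy⟩ := aux_exists_unit f hf (by linarith : (0:ℝ) ≤ 1 - e/3) (by linarith)
  obtain ⟨hgy, bound⟩ := aux_claimA f g hf hg1 he he6 hyn (by linarith) pos
  have hgy1 : g y ≤ 1 := by
    have h1 : ‖g y‖ ≤ ‖g‖ * ‖y‖ := g.le_opNorm y
    rw [Real.norm_eq_abs] at h1
    calc g y ≤ |g y| := le_abs_self _
    _ ≤ ‖g‖ * ‖y‖ := h1
    _ ≤ 1 := mul_le_one₀ hg1 (norm_nonneg y) hyn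
  -- lower bound on g y using x
  have hxn : ‖(‖c‖⁻¹ • c)‖ ≤ 1 := by
    rw [norm_smul, norm_inv, norm_norm, inv_mul_cancel₀ hcpos.ne']
  have hfx1 : f (‖c‖⁻¹ • c) ≤ 1 := by
    have h1 : ‖f (‖c‖⁻¹ • c)‖ ≤ ‖f‖ * ‖(‖c‖⁻¹ • c)‖ := f.le_opNorm _
    rw [hf, one_mul, Real.norm_eq_abs] at h1
    have := le_abs_self (f (‖c‖⁻¹ • c))
    linarith
  have hgylow : 1 - g y < δ + 3*e := by
    have h1 := bound (‖c‖⁻¹ • c) hxn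
    have h2 := (abs_le.mp h1).2
    have A : f (‖c‖⁻¹ • c) * g y ≤ 1 * g y := mul_le_mul_of_nonneg_right hfx1 hgy.le
    have B : 3*e*g y ≤ 3*e*1 := mul_le_mul_of_nonneg_left hgy1 (by linarith)
    have := hgx
    nlinarith [h2, A, B]
  -- final estimate
  have key : ∀ z : X, ‖z‖ ≤ 1 → ‖(g - f) z‖ ≤ 6*e + δ := by
    intro z hz
    have h1 := bound z hz
    have hfz : |f z| ≤ 1 := by
      have h2 : ‖f z‖ ≤ ‖f‖ * ‖z‖ := f.le_opNorm z
      rw [hf, one_mul, Real.norm_eq_abs] at h2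
      linarith
    have tri := abs_sub_le (g z) (f z * g y) (f z)
    have h3 : |f z * g y - f z| ≤ 1 - g y := by
      have heq : f z * g y - f z = f z * (g y - 1) := by ring
      rw [heq, abs_mul, abs_of_nonpos (by linarith : g y - 1 ≤ 0)]
      nlinarith [abs_nonneg (f z)]
    have h4 : ‖(g - f) z‖ = |g z - f z| := by
      rw [ContinuousLinearMap.sub_apply, Real.norm_eq_abs]
    rw [h4]
    have B : 3*e*g y ≤ 3*e*1 := mul_le_mul_of_nonneg_left hgy1 (by linarith)
    nlinarith [tri, h1, h3, hgylow, B]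
  have hnorm : ‖g - f‖ ≤ 6*e + δ :=
    aux_opNorm_le_of_unit (g - f) (by positivity) key
  rw [Metric.mem_ball, dist_eq_norm]
  have : 6*e + δ < ε := by rw [he_def] at *; linarith
  linarith
end

section
/- Let X be a Banach space. Suppose that for every ε > 0 there exists δ > 0 such that for any f ∈ S(X*) there exists x ∈ S(X) with D(S(X) ∩ B(x, δ)) ⊆ B(f, ε) (condition (c)). Then for every ε > 0 there exists δ > 0 such that every support mapping maps any δ-net in S(X) to an ε-net in S(X*). Conversely, if condition (c) fails, then the net condition fails: there exist ε > 0 and, for each δ > 0, a δ-net in S(X) and a support mapping sending it to a set that is not an ε-net in S(X*). -/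
/-!
If (c) holds and `N` is a `δ/2`-net of the unit sphere, then for a norm-one `f` pick the `x` given
by (c); some `n ∈ N` lies within `δ` of `x`, so `φ n ∈ D(S(X) ∩ B(x, δ)) ⊆ B(f, ε)`.

Conversely, if the net condition holds with `ε/2` and `δ`, but (c) fails for `ε`, `δ` at some `f`,
then every unit vector is within `δ` of a unit vector `z` normed by some functional at distance
`≥ ε` from `f`. These `z` form a `δ`-net, and a support mapping that picks such a far functional at
each of them sends this net to a set with no point within `ε/2` of `f`.
-/

section SupportMappings

variable {X : Type*} [NormedAddCommGroup X] [NormedSpace ℝ X]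

/-- `D(S(X) ∩ B(x, δ))`. -/
def supportFunctionalsNear (x : X) (δ : ℝ) : Set (StrongDual ℝ X) :=
  {g | ‖g‖ = 1 ∧ ∃ z : X, ‖z‖ = 1 ∧ ‖z - x‖ < δ ∧ g z = 1}

def IsSupportMapping (φ : X → StrongDual ℝ X) : Prop :=
  ∀ y : X, ‖y‖ = 1 → ‖φ y‖ = 1 ∧ φ y y = 1

variable (X) in
/-- Condition (c). -/
def UniformSupportCondition : Prop :=
  ∀ ε : ℝ, 0 < ε → ∃ δ : ℝ, 0 < δ ∧
    ∀ f : StrongDual ℝ X, ‖f‖ = 1 → ∃ x : X, ‖x‖ = 1 ∧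
      supportFunctionalsNear x δ ⊆ Metric.ball f ε

variable (X) in
/-- Every support mapping sends every `δ`-net of `S(X)` to an `ε`-net of `S(X*)`. -/
def SupportNetCondition : Prop :=
  ∀ ε : ℝ, 0 < ε → ∃ δ : ℝ, 0 < δ ∧
    ∀ φ : X → StrongDual ℝ X, IsSupportMapping φ →
      ∀ N : Set X, N ⊆ {y : X | ‖y‖ = 1} →
        (∀ z : X, ‖z‖ = 1 → ∃ n ∈ N, ‖z - n‖ ≤ δ) →
        ∀ f : StrongDual ℝ X, ‖f‖ = 1 → ∃ n ∈ N, ‖f - φ n‖ ≤ ε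

theorem exists_norm_eq_one_apply_eq_one {y : X} (hy : ‖y‖ = 1) :
    ∃ g : StrongDual ℝ X, ‖g‖ = 1 ∧ g y = 1 := by
  obtain ⟨g, hg, hgy⟩ := exists_dual_vector ℝ y (by simp [hy])
  exact ⟨g, hg, by simpa [hy] using hgy⟩

theorem exists_isSupportMapping_preferring (Q : StrongDual ℝ X → Prop) :
    ∃ φ : X → StrongDual ℝ X, IsSupportMapping φ ∧
      ∀ y : X, ‖y‖ = 1 → (∃ g : StrongDual ℝ X, ‖g‖ = 1 ∧ g y = 1 ∧ Q g) → Q (φ y) := by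
  have hchoice : ∀ y : X, ‖y‖ = 1 → ∃ g : StrongDual ℝ X, (‖g‖ = 1 ∧ g y = 1) ∧
      ((∃ g' : StrongDual ℝ X, ‖g'‖ = 1 ∧ g' y = 1 ∧ Q g') → Q g) := by
    intro y hy
    by_cases hQ : ∃ g : StrongDual ℝ X, ‖g‖ = 1 ∧ g y = 1 ∧ Q g
    · obtain ⟨g, hg, hgy, hgQ⟩ := hQ
      exact ⟨g, ⟨hg, hgy⟩, fun _ => hgQ⟩
    · obtain ⟨g, hg, hgy⟩ := exists_norm_eq_one_apply_eq_one hy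
      exact ⟨g, ⟨hg, hgy⟩, fun h => absurd h hQ⟩
  choose! φ hφ hφQ using hchoice
  exact ⟨φ, hφ, hφQ⟩

theorem UniformSupportCondition.supportNetCondition (hc : UniformSupportCondition X) :
    SupportNetCondition X := by
  intro ε hε
  obtain ⟨δ, hδ, hcδ⟩ := hc ε hε
  refine ⟨δ / 2, half_pos hδ, fun φ hφ N hN hnet f hf => ?_⟩
  obtain ⟨x, hx, hsub⟩ := hcδ f hf
  obtain ⟨n, hnN, hnx⟩ := hnet x hx
  have hn : ‖n‖ = 1 := hN hnN
  have hnear : φ n ∈ supportFunctionalsNear x δ :=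
    ⟨(hφ n hn).1, n, hn, by rw [norm_sub_rev]; linarith, (hφ n hn).2⟩
  have hball := hsub hnear
  rw [Metric.mem_ball, dist_eq_norm, norm_sub_rev] at hball
  exact ⟨n, hnN, hball.le⟩

theorem SupportNetCondition.uniformSupportCondition (hnet : SupportNetCondition X) :
    UniformSupportCondition X := by
  intro ε hε
  obtain ⟨δ, hδ, hnetδ⟩ := hnet (ε / 2) (half_pos hε)
  refine ⟨δ, hδ, fun f hf => ?_⟩
  by_contra! hfar
  obtain ⟨φ, hφ, hφfar⟩ := exists_isSupportMapping_preferring fun g : StrongDual ℝ X => ε ≤ ‖g - f‖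
  set N : Set X := {z | ‖z‖ = 1 ∧ ∃ g : StrongDual ℝ X, ‖g‖ = 1 ∧ g z = 1 ∧ ε ≤ ‖g - f‖}
  have hN_net : ∀ x : X, ‖x‖ = 1 → ∃ n ∈ N, ‖x - n‖ ≤ δ := by
    intro x hx
    obtain ⟨g, ⟨hg, z, hz, hzx, hgz⟩, hgf⟩ := Set.not_subset.mp (hfar x hx)
    rw [Metric.mem_ball, dist_eq_norm, not_lt] at hgf
    exact ⟨z, ⟨hz, g, hg, hgz, hgf⟩, by rw [norm_sub_rev]; exact hzx.le⟩
  obtain ⟨n, ⟨hn, hn_far⟩, hfn⟩ := hnetδ φ hφ N (fun z hz => hz.1) hN_net f hf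
  have := hφfar n hn hn_far
  rw [norm_sub_rev] at this
  linarith

end SupportMappings

theorem stmt_13_general {X : Type*} [NormedAddCommGroup X] [NormedSpace ℝ X] :
    ((∀ ε : ℝ, 0 < ε → ∃ δ : ℝ, 0 < δ ∧
      ∀ f : StrongDual ℝ X, ‖f‖ = 1 → ∃ x : X, ‖x‖ = 1 ∧
        {g : StrongDual ℝ X | ‖g‖ = 1 ∧ ∃ z : X, ‖z‖ = 1 ∧ ‖z - x‖ < δ ∧ g z = 1} ⊆
          Metric.ball f ε) →
     (∀ ε : ℝ, 0 < ε → ∃ δ : ℝ, 0 < δ ∧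
      ∀ φ : X → StrongDual ℝ X, (∀ y : X, ‖y‖ = 1 → ‖φ y‖ = 1 ∧ φ y y = 1) →
        ∀ N : Set X, N ⊆ {y : X | ‖y‖ = 1} →
          (∀ z : X, ‖z‖ = 1 → ∃ n ∈ N, ‖z - n‖ ≤ δ) →
          ∀ f : StrongDual ℝ X, ‖f‖ = 1 → ∃ n ∈ N, ‖f - φ n‖ ≤ ε)) ∧
    (¬ (∀ ε : ℝ, 0 < ε → ∃ δ : ℝ, 0 < δ ∧
      ∀ f : StrongDual ℝ X, ‖f‖ = 1 → ∃ x : X, ‖x‖ = 1 ∧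
        {g : StrongDual ℝ X | ‖g‖ = 1 ∧ ∃ z : X, ‖z‖ = 1 ∧ ‖z - x‖ < δ ∧ g z = 1} ⊆
          Metric.ball f ε) →
     ¬ (∀ ε : ℝ, 0 < ε → ∃ δ : ℝ, 0 < δ ∧
      ∀ φ : X → StrongDual ℝ X, (∀ y : X, ‖y‖ = 1 → ‖φ y‖ = 1 ∧ φ y y = 1) →
        ∀ N : Set X, N ⊆ {y : X | ‖y‖ = 1} →
          (∀ z : X, ‖z‖ = 1 → ∃ n ∈ N, ‖z - n‖ ≤ δ) →
          ∀ f : StrongDual ℝ X, ‖f‖ = 1 → ∃ n ∈ N, ‖f - φ n‖ ≤ ε)) :=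
  ⟨UniformSupportCondition.supportNetCondition,
    fun hc hnet => hc (SupportNetCondition.uniformSupportCondition hnet)⟩

/-- Condition (c) holds if and only if, given `ε > 0`, there is `δ > 0` such that
every support mapping maps every `δ`-net in `S(X)` to an `ε`-net in `S(X*)`. -/
theorem stmt_13 {X : Type*} [NormedAddCommGroup X] [NormedSpace ℝ X] [CompleteSpace X] :
    ((∀ ε : ℝ, 0 < ε → ∃ δ : ℝ, 0 < δ ∧
      ∀ f : StrongDual ℝ X, ‖f‖ = 1 → ∃ x : X, ‖x‖ = 1 ∧
        {g : StrongDual ℝ X | ‖g‖ = 1 ∧ ∃ z : X, ‖z‖ = 1 ∧ ‖z - x‖ < δ ∧ g z = 1} ⊆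
          Metric.ball f ε) →
     (∀ ε : ℝ, 0 < ε → ∃ δ : ℝ, 0 < δ ∧
      ∀ φ : X → StrongDual ℝ X, (∀ y : X, ‖y‖ = 1 → ‖φ y‖ = 1 ∧ φ y y = 1) →
        ∀ N : Set X, N ⊆ {y : X | ‖y‖ = 1} →
          (∀ z : X, ‖z‖ = 1 → ∃ n ∈ N, ‖z - n‖ ≤ δ) →
          ∀ f : StrongDual ℝ X, ‖f‖ = 1 → ∃ n ∈ N, ‖f - φ n‖ ≤ ε)) ∧
    (¬ (∀ ε : ℝ, 0 < ε → ∃ δ : ℝ, 0 < δ ∧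
      ∀ f : StrongDual ℝ X, ‖f‖ = 1 → ∃ x : X, ‖x‖ = 1 ∧
        {g : StrongDual ℝ X | ‖g‖ = 1 ∧ ∃ z : X, ‖z‖ = 1 ∧ ‖z - x‖ < δ ∧ g z = 1} ⊆
          Metric.ball f ε) →
     ¬ (∀ ε : ℝ, 0 < ε → ∃ δ : ℝ, 0 < δ ∧
      ∀ φ : X → StrongDual ℝ X, (∀ y : X, ‖y‖ = 1 → ‖φ y‖ = 1 ∧ φ y y = 1) →
        ∀ N : Set X, N ⊆ {y : X | ‖y‖ = 1} →
          (∀ z : X, ‖z‖ = 1 → ∃ n ∈ N, ‖z - n‖ ≤ δ) →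
          ∀ f : StrongDual ℝ X, ‖f‖ = 1 → ∃ n ∈ N, ‖f - φ n‖ ≤ ε)) :=
  stmt_13_general
end

section
/- Let X be a real Banach space in which every x ∈ S(X) is uniformly semidenting: for every ε > 0 there exists δ > 0 such that for any x ∈ S(X) there exists f ∈ S(X*) with S(B(X), f, δ) ⊆ B(x, ε). Then X* has the w*-UMIP: for every ε > 0 and M(ε) ≥ 2 there is K(ε) > 0 such that whenever a w*-compact convex set C ⊆ X* and f₀ ∈ X* satisfy diam(C) ≤ M(ε) and d(f₀, C) ≥ ε, there is a closed ball B ⊆ X* of radius ≤ K(ε) with C ⊆ B and d(f₀, B) ≥ ε/2. -/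
/-!
Thicken `C` by the dual ball of radius `3ε/4`: the result is still weak-* compact and convex and
misses `f₀`, so Hahn–Banach in the weak-* topology separates them by an evaluation at some unit
vector `x`, giving `(g - f₀) x > 3ε/4` on `C`. Uniform semidentability yields `f` whose slice of
depth `δ` lies within `ε/(4R)` of `x`, where `R = 2M + ε/2` bounds `‖g - f₀‖` on `C` (otherwise
the ball of radius `M` about a point of `C` already works). Then, with `t = (R + ε/2)/δ`, every
`g ∈ C` lies in the ball of radius `t - ε/2` about `f₀ + t f`: on the slice `(g - f₀) z ≥ ε/2`
because `z` is close to `x`, and off the slice `t f z ≤ t - (R + ε/2)`.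
That ball stays at distance `ε/2` from `f₀`, whose distance to its centre is `t`.
-/

open Metric StrongDual Pointwise

theorem StrongDual.isBounded_of_isCompact_toWeakDual {𝕜 E : Type*} [NontriviallyNormedField 𝕜]
    [SeminormedAddCommGroup E] [NormedSpace 𝕜 E] [CompleteSpace E] {C : Set (StrongDual 𝕜 E)}
    (hC : IsCompact (toWeakDual '' C)) : Bornology.IsBounded C := by
  have := WeakDual.isBounded_iff_isVonNBounded.2 (hC.isVonNBounded 𝕜)
  rwa [← WeakDual.isBounded_toWeakDual_preimage_iff_isBounded,
    Set.preimage_image_eq _ toWeakDual.injective] at this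

theorem sub_le_norm_sub_of_mem_closedBall {E : Type*} [SeminormedAddCommGroup E] (a : E)
    {c w : E} {r : ℝ} (hw : w ∈ closedBall c r) : ‖a - c‖ - r ≤ ‖a - w‖ := by
  rw [mem_closedBall, dist_eq_norm] at hw
  linarith [norm_sub_le_norm_sub_add_norm_sub a w c]

section

variable {X : Type*} [NormedAddCommGroup X] [NormedSpace ℝ X]

theorem exists_norm_eq_one_lt_sub_apply_of_isCompact {C : Set (StrongDual ℝ X)}
    {f₀ : StrongDual ℝ X} {r : ℝ} (hconv : Convex ℝ C) (hcpt : IsCompact (toWeakDual '' C))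
    (hne : C.Nonempty) (hr : 0 ≤ r) (hdist : ∀ g ∈ C, r < ‖f₀ - g‖) :
    ∃ x : X, ‖x‖ = 1 ∧ ∀ g ∈ C, r < (g - f₀) x := by
  set D : Set (WeakDual ℝ X) := toWeakDual '' (C + closedBall (0 : StrongDual ℝ X) r)
  have hDconv : Convex ℝ D :=
    (hconv.add (convex_closedBall 0 r)).linear_image toWeakDual.toLinearMap
  have hDcpt : IsCompact D := by
    rw [show D = _ from Set.image_add toWeakDual]
    refine hcpt.add ?_
    rw [LinearEquiv.image_eq_preimage_symm]
    exact WeakDual.isCompact_closedBall 0 r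
  have hf₀D : toWeakDual f₀ ∉ D := by
    rintro ⟨_, ⟨g, hg, b, hb, rfl⟩, hgb⟩
    obtain rfl := toWeakDual.injective hgb
    have := hdist g hg
    rw [add_sub_cancel_left] at this
    exact (mem_closedBall_zero_iff.1 hb).not_gt this
  have : LocallyConvexSpace ℝ (WeakDual ℝ X) := WeakBilin.locallyConvexSpace
  obtain ⟨F, u, hFf₀, hFD⟩ := geometric_hahn_banach_point_closed hDconv hDcpt.isClosed hf₀D
  -- weak-* continuous functionals are evaluations
  obtain ⟨x₀, rfl⟩ := LinearMap.dualEmbedding_surjective (topDualPairing ℝ X) F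
  have hsep : ∀ g ∈ C, ∀ b ∈ closedBall (0 : StrongDual ℝ X) r, f₀ x₀ < (g + b) x₀ :=
    fun g hg b hb => hFf₀.trans (hFD _ ⟨g + b, Set.add_mem_add hg hb, rfl⟩)
  obtain ⟨g₀, hg₀⟩ := hne
  have hx₀ : 0 < ‖x₀‖ := by
    refine (norm_nonneg _).lt_of_ne' fun h0 => ?_
    simpa [norm_eq_zero.1 h0] using hsep g₀ hg₀ 0 (mem_closedBall_self hr)
  obtain ⟨j, hj, hjx₀⟩ := exists_dual_vector ℝ x₀ hx₀.ne'
  refine ⟨‖x₀‖⁻¹ • x₀, norm_smul_inv_norm (norm_pos_iff.1 hx₀), fun g hg => ?_⟩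
  have hgx₀ : f₀ x₀ + r * ‖x₀‖ < g x₀ := by
    simpa [hjx₀] using hsep g hg (-(r • j)) (by simp [norm_smul, hj, abs_of_nonneg hr])
  rw [map_smul, smul_eq_mul, lt_inv_mul_iff₀ hx₀, sub_apply]
  linarith

theorem sub_apply_le_of_slice_subset_ball {φ f : StrongDual ℝ X} {x z : X} {R a s t δ η : ℝ}
    (hφ : ‖φ‖ ≤ R) (hφx : a ≤ φ x) (hf : ‖f‖ ≤ 1) (ht : 0 ≤ t)
    (hslice : {y | ‖y‖ ≤ 1 ∧ 1 - δ < f y} ⊆ ball x η)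
    (has : s ≤ a - R * η) (hts : s ≤ t * δ - R) (hz : ‖z‖ ≤ 1) :
    t * f z - φ z ≤ t - s := by
  have hfz : f z ≤ 1 :=
    (le_abs_self _).trans <| (f.le_opNorm z).trans <| by nlinarith [norm_nonneg f]
  rcases lt_or_ge (1 - δ) (f z) with hzS | hzS
  · have hzx : ‖x - z‖ < η := by simpa [dist_eq_norm'] using hslice ⟨hz, hzS⟩
    have : φ (x - z) ≤ R * η := (le_abs_self _).trans <| (φ.le_opNorm _).trans <| by
      nlinarith [norm_nonneg φ, norm_nonneg (x - z)]
    rw [map_sub] at this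
    nlinarith
  · have : -φ z ≤ R := (neg_le_abs _).trans <| (φ.le_opNorm _).trans <| by
      nlinarith [norm_nonneg φ, norm_nonneg z]
    nlinarith

theorem norm_sub_smul_le_of_slice_subset_ball {φ f : StrongDual ℝ X} {x : X} {R a s t δ η : ℝ}
    (hx : ‖x‖ = 1) (hφ : ‖φ‖ ≤ R) (hφx : a ≤ φ x) (hf : ‖f‖ ≤ 1) (ht : 0 ≤ t)
    (hslice : {y | ‖y‖ ≤ 1 ∧ 1 - δ < f y} ⊆ ball x η)
    (has : s ≤ a - R * η) (hts : s ≤ t * δ - R) :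
    ‖φ - t • f‖ ≤ t - s := by
  have hbound : ∀ z : X, ‖z‖ ≤ 1 → |(φ - t • f) z| ≤ t - s := by
    intro z hz
    have h₁ := sub_apply_le_of_slice_subset_ball hφ hφx hf ht hslice has hts hz
    have h₂ := sub_apply_le_of_slice_subset_ball hφ hφx hf ht hslice has hts (z := -z)
      (by rwa [norm_neg])
    simp only [map_neg] at h₂
    simp only [sub_apply, smul_apply, smul_eq_mul]
    rw [abs_le]
    constructor <;> linarith
  exact ContinuousLinearMap.opNorm_le_of_unit_norm ((abs_nonneg _).trans (hbound x hx.le))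
    fun z hz => hbound z hz.le

end

/-- If every unit vector of `X` is uniformly semidenting, then `X*` has the w*-UMIP. -/
theorem stmt_18 {X : Type*} [NormedAddCommGroup X] [NormedSpace ℝ X] [CompleteSpace X]
    (h : ∀ ε : ℝ, 0 < ε → ∃ δ : ℝ, 0 < δ ∧
      ∀ x : X, ‖x‖ = 1 → ∃ f : StrongDual ℝ X, ‖f‖ = 1 ∧
        {y : X | ‖y‖ ≤ 1 ∧ 1 - δ < f y} ⊆ Metric.ball x ε) :
    ∀ ε : ℝ, 0 < ε → ∀ M : ℝ, 2 ≤ M → ∃ K : ℝ, 0 < K ∧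
      ∀ (C : Set (StrongDual ℝ X)) (f₀ : StrongDual ℝ X),
        Convex ℝ C → IsCompact (StrongDual.toWeakDual '' C) →
        Metric.diam C ≤ M → (∀ g ∈ C, ε ≤ ‖f₀ - g‖) →
        ∃ (c : StrongDual ℝ X) (r : ℝ), r ≤ K ∧ C ⊆ Metric.closedBall c r ∧
          ∀ w ∈ Metric.closedBall c r, ε / 2 ≤ ‖f₀ - w‖ := by
  intro ε hε M hM
  set R := 2 * M + ε / 2 with hRdef
  have hR : 0 < R := by positivity
  obtain ⟨δ, hδ, hsd⟩ := h (ε / (4 * R)) (by positivity)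
  set t := (R + ε / 2) / δ
  have ht : 0 ≤ t := by positivity
  refine ⟨max M t, lt_max_of_lt_left (by linarith), fun C f₀ hconv hcpt hdiam hdist => ?_⟩
  obtain rfl | ⟨g₀, hg₀⟩ := C.eq_empty_or_nonempty
  · exact ⟨f₀, -1, by linarith [le_max_left M t], Set.empty_subset _, by simp⟩
  have hgg₀ : ∀ g ∈ C, ‖g - g₀‖ ≤ M := fun g hg => by
    simpa [dist_eq_norm] using
      (dist_le_diam_of_mem (isBounded_of_isCompact_toWeakDual hcpt) hg hg₀).trans hdiam
  by_cases hfar : M + ε / 2 ≤ ‖f₀ - g₀‖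
  · refine ⟨g₀, M, le_max_left _ _, fun g hg => by simpa [dist_eq_norm] using hgg₀ g hg,
      fun w hw => ?_⟩
    linarith [sub_le_norm_sub_of_mem_closedBall f₀ hw]
  obtain ⟨x, hx, hsep⟩ := exists_norm_eq_one_lt_sub_apply_of_isCompact (f₀ := f₀)
    (r := 3 * ε / 4) hconv hcpt ⟨g₀, hg₀⟩ (by positivity) fun g hg => by linarith [hdist g hg]
  obtain ⟨f, hf, hslice⟩ := hsd x hx
  refine ⟨f₀ + t • f, t - ε / 2, by linarith [le_max_right M t], fun g hg => ?_, fun w hw => ?_⟩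
  · have hgR : ‖g - f₀‖ ≤ R := by
      linarith [norm_sub_le_norm_sub_add_norm_sub g g₀ f₀, hgg₀ g hg, norm_sub_rev g₀ f₀,
        not_le.1 hfar, hRdef]
    rw [mem_closedBall, dist_eq_norm, ← sub_sub]
    refine norm_sub_smul_le_of_slice_subset_ball hx hgR (hsep g hg).le hf.le ht hslice ?_ ?_
    · have : R * (ε / (4 * R)) = ε / 4 := by field_simp
      linarith
    · rw [div_mul_cancel₀ _ hδ.ne']
      linarith
  · have : ‖f₀ - (f₀ + t • f)‖ = t := by simp [norm_smul, hf, abs_of_nonneg ht]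
    linarith [sub_le_norm_sub_of_mem_closedBall f₀ hw]
end

section
/- Let X be a real Banach space. Suppose that for every ε > 0 there exists δ > 0 such that for every x ∈ S(X) there exists a norm-attaining f ∈ S(X*) with d*₁(f, δ) < ε/4 and D⁻¹(f) ⊆ B(x, ε/4). Then for every ε > 0 there exists α > 0 such that for every x ∈ S(X) there exists f ∈ S(X*) with S(B(X), f, α) ⊆ B(x, ε) (i.e., every x ∈ S(X) is uniformly semidenting). -/
/-!
If `z` attains `f` and `y` lies in the slice `S(B(X), f, α)`, test the symmetric quotient
`(‖f + λg‖ + ‖f - λg‖ - 2) / λ` on a functional `g` norming `y - z`: evaluating `f + λg` at `y`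
and `f - λg` at `z` gives `λ ‖y - z‖ - α` as a lower bound for its numerator. So a small smoothness
modulus `d*₁(f, δ)` forces the slice into a small ball around `z`, and `z` is `ε/4`-close to `x`.
-/

section SymmetricQuotient

variable {X : Type*} [NormedAddCommGroup X] [NormedSpace ℝ X]

/-- The quotient whose supremum over `0 < λ < δ`, `‖g‖ ≤ 1` is the modulus `d*₁(f, δ)`. -/
noncomputable def smoothnessQuotient (f g : StrongDual ℝ X) (lam : ℝ) : ℝ :=
  (‖f + lam • g‖ + ‖f - lam • g‖ - 2) / lam

lemma apply_le_opNorm_of_norm_le_one (φ : StrongDual ℝ X) {y : X} (hy : ‖y‖ ≤ 1) :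
    φ y ≤ ‖φ‖ :=
  (le_abs_self _).trans ((φ.le_opNorm_of_le hy).trans_eq (mul_one _))

lemma smoothnessQuotient_le_two {f g : StrongDual ℝ X} {lam : ℝ} (hf : ‖f‖ ≤ 1)
    (hg : ‖g‖ ≤ 1) (hlam : 0 < lam) : smoothnessQuotient f g lam ≤ 2 := by
  have hlg : ‖lam • g‖ ≤ lam := by
    rw [norm_smul, Real.norm_of_nonneg hlam.le]
    exact mul_le_of_le_one_right hlam.le hg
  rw [smoothnessQuotient, div_le_iff₀ hlam]
  linarith [norm_add_le f (lam • g), norm_sub_le f (lam • g)]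

lemma smoothnessQuotient_le_sSup {f g : StrongDual ℝ X} {lam δ : ℝ} (hf : ‖f‖ ≤ 1)
    (hlam : 0 < lam) (hlamδ : lam < δ) (hg : ‖g‖ ≤ 1) :
    smoothnessQuotient f g lam ≤ sSup {r : ℝ | ∃ lam : ℝ, ∃ g : StrongDual ℝ X, 0 < lam ∧
      lam < δ ∧ ‖g‖ ≤ 1 ∧ r = (‖f + lam • g‖ + ‖f - lam • g‖ - 2) / lam} := by
  refine le_csSup ⟨2, ?_⟩ ⟨lam, g, hlam, hlamδ, hg, rfl⟩
  rintro r ⟨l, g', hl, -, hg', rfl⟩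
  exact smoothnessQuotient_le_two hf hg' hl

lemma mul_norm_sub_add_apply_sub_one_le {f g : StrongDual ℝ X} {y z : X} (lam : ℝ)
    (hy : ‖y‖ ≤ 1) (hz : ‖z‖ ≤ 1) (hfz : f z = 1) (hg : g (y - z) = ‖y - z‖) :
    lam * ‖y - z‖ + (f y - 1) ≤ ‖f + lam • g‖ + ‖f - lam • g‖ - 2 := by
  have hplus := apply_le_opNorm_of_norm_le_one (f + lam • g) hy
  have hminus := apply_le_opNorm_of_norm_le_one (f - lam • g) hz
  simp only [add_apply, sub_apply, smul_apply, smul_eq_mul, hfz] at hplus hminus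
  have hlg : lam * ‖y - z‖ = lam * g y - lam * g z := by rw [← hg, map_sub]; ring
  linarith

/-- The paper's estimate `d*₂(f, α) ≤ d*₁(f, δ) + 2α/δ`, measured from a point of `D⁻¹(f)`. -/
lemma norm_sub_lt_of_mem_slice {f : StrongDual ℝ X} {y z : X} {lam M α : ℝ}
    (hz : ‖z‖ ≤ 1) (hfz : f z = 1) (hlam : 0 < lam)
    (hM : ∀ g : StrongDual ℝ X, ‖g‖ ≤ 1 → smoothnessQuotient f g lam ≤ M)
    (hy : ‖y‖ ≤ 1) (hfy : 1 - α < f y) : ‖y - z‖ < M + α / lam := by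
  have : Nontrivial X := nontrivial_of_ne z 0 fun h => by simp [h] at hfz
  obtain ⟨g, hg, hgyz⟩ := exists_dual_vector' ℝ (y - z)
  have hnum := mul_norm_sub_add_apply_sub_one_le lam hy hz hfz (by exact_mod_cast hgyz)
  have hquot := hM g hg.le
  rw [smoothnessQuotient, div_le_iff₀ hlam] at hquot
  have key : lam * ‖y - z‖ < lam * (M + α / lam) := by
    rw [mul_add, mul_div_cancel₀ _ hlam.ne']
    linarith
  exact lt_of_mul_lt_mul_left key hlam.le

end SymmetricQuotient

theorem stmt_19_general {X : Type*} [NormedAddCommGroup X] [NormedSpace ℝ X]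
    (h : ∀ ε : ℝ, 0 < ε → ∃ δ : ℝ, 0 < δ ∧
      ∀ x : X, ‖x‖ = 1 → ∃ f : StrongDual ℝ X, ‖f‖ = 1 ∧ (∃ y : X, ‖y‖ = 1 ∧ f y = 1) ∧
        sSup {r : ℝ | ∃ lam : ℝ, ∃ g : StrongDual ℝ X, 0 < lam ∧ lam < δ ∧ ‖g‖ ≤ 1 ∧
          r = (‖f + lam • g‖ + ‖f - lam • g‖ - 2) / lam} < ε / 4 ∧
        {y : X | ‖y‖ = 1 ∧ f y = 1} ⊆ Metric.ball x (ε / 4)) :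
    ∀ ε : ℝ, 0 < ε → ∃ α : ℝ, 0 < α ∧
      ∀ x : X, ‖x‖ = 1 → ∃ f : StrongDual ℝ X, ‖f‖ = 1 ∧
        {y : X | ‖y‖ ≤ 1 ∧ 1 - α < f y} ⊆ Metric.ball x ε := by
  intro ε hε
  obtain ⟨δ, hδ, hδx⟩ := h ε hε
  refine ⟨ε * δ / 16, by positivity, fun x hx => ?_⟩
  obtain ⟨f, hf, ⟨z, hz, hfz⟩, hsup, hball⟩ := hδx x hx
  refine ⟨f, hf, ?_⟩
  rintro y ⟨hy, hfy⟩
  have hyz : ‖y - z‖ < ε / 4 + ε * δ / 16 / (δ / 2) :=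
    norm_sub_lt_of_mem_slice hz.le hfz (half_pos hδ)
      (fun g hg => (smoothnessQuotient_le_sSup hf.le (half_pos hδ) (half_lt_self hδ) hg).trans
        hsup.le) hy hfy
  have hα : ε * δ / 16 / (δ / 2) = ε / 8 := by field_simp; ring
  have hzx : dist z x < ε / 4 := hball ⟨hz, hfz⟩
  rw [Metric.mem_ball]
  calc dist y x ≤ ‖y - z‖ + dist z x := (dist_triangle y z x).trans_eq (by rw [dist_eq_norm])
    _ < ε := by linarith

/-- Condition (e*) implies that every unit vector of `X` is uniformly semidenting. -/
theorem stmt_19 {X : Type*} [NormedAddCommGroup X] [NormedSpace ℝ X] [CompleteSpace X]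
    (h : ∀ ε : ℝ, 0 < ε → ∃ δ : ℝ, 0 < δ ∧
      ∀ x : X, ‖x‖ = 1 → ∃ f : StrongDual ℝ X, ‖f‖ = 1 ∧ (∃ y : X, ‖y‖ = 1 ∧ f y = 1) ∧
        sSup {r : ℝ | ∃ lam : ℝ, ∃ g : StrongDual ℝ X, 0 < lam ∧ lam < δ ∧ ‖g‖ ≤ 1 ∧
          r = (‖f + lam • g‖ + ‖f - lam • g‖ - 2) / lam} < ε / 4 ∧
        {y : X | ‖y‖ = 1 ∧ f y = 1} ⊆ Metric.ball x (ε / 4)) :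
    ∀ ε : ℝ, 0 < ε → ∃ α : ℝ, 0 < α ∧
      ∀ x : X, ‖x‖ = 1 → ∃ f : StrongDual ℝ X, ‖f‖ = 1 ∧
        {y : X | ‖y‖ ≤ 1 ∧ 1 - α < f y} ⊆ Metric.ball x ε :=
  stmt_19_general h
end
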